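/- arXiv:2006.16222 — 9 statements merged into one kernel-verified Lean document; each statement's English description precedes it below -/
import Mathlib

section
/- A node multicut M ⊆ V \ T of (G,B) is minimal if and only if there exist ℓ connected components C₁,…,C_ℓ of G − M, each containing at least one terminal of T(B), such that (1) no component C_i contains both vertices of some terminal pair in B, and (2) for every v ∈ M there is a terminal pair {s,t} ∈ B such that v has a neighbor both in the component (among C₁,…,C_ℓ) containing s and in the component containing t. -/
open SimpleGraph Set

variable {V : Type*}

/-- The set of terminals occurring in a set `B` of terminal pairs. -/
def terminalSet (B : Set (V × V)) : Set V := {v | ∃ p ∈ B, v = p.1 ∨ v = p.2}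

/-- `s` and `t` are separated in `G - M` (the graph obtained by deleting the vertices of `M`). -/
def SepSets (G : SimpleGraph V) (M : Set V) (s t : V) : Prop :=
  ∀ (hs : s ∈ (Mᶜ : Set V)) (ht : t ∈ (Mᶜ : Set V)),
    ¬ (G.induce (Mᶜ : Set V)).Reachable ⟨s, hs⟩ ⟨t, ht⟩

/-- `M` is a node multicut of `(G, B)`. -/
def IsNodeMulticut (G : SimpleGraph V) (B : Set (V × V)) (M : Set V) : Prop :=
  M ⊆ (terminalSet B)ᶜ ∧ ∀ p ∈ B, SepSets G M p.1 p.2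

/-- `M` is a minimal node multicut of `(G, B)`. -/
def IsMinNodeMulticut (G : SimpleGraph V) (B : Set (V × V)) (M : Set V) : Prop :=
  IsNodeMulticut G B M ∧ ∀ M' ⊂ M, ¬ IsNodeMulticut G B M'

/-- `C` is (the vertex set of) a connected component of `G - M`. -/
def IsCompOf (G : SimpleGraph V) (M : Set V) (C : Set V) : Prop :=
  ∃ c : (G.induce (Mᶜ : Set V)).ConnectedComponent, C = Subtype.val '' c.supp


lemma induced_walk_to_walk {G : SimpleGraph V} {S : Set V} {a b : S}
    (p : (G.induce S).Walk a b) :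
    ∃ w : G.Walk (a : V) (b : V), ∀ x ∈ w.support, x ∈ S := by
  induction p with
  | @nil a => exact ⟨.nil, by rintro x hx; simp at hx; subst hx; exact a.2⟩
  | @cons a c b h p ih =>
    obtain ⟨w, hw⟩ := ih
    refine ⟨.cons h w, ?_⟩
    intro x hx
    rcases List.mem_cons.mp hx with rfl | hx
    · exact a.2
    · exact hw x hx

lemma walk_to_induced {G : SimpleGraph V} {S : Set V} {s t : V} (w : G.Walk s t)
    (hsup : ∀ x ∈ w.support, x ∈ S) (hs : s ∈ S) (ht : t ∈ S) :
    (G.induce S).Reachable ⟨s, hs⟩ ⟨t, ht⟩ := by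
  induction w with
  | nil => exact Reachable.refl _
  | @cons s b t h p ih =>
    have hb : b ∈ S := hsup b (by simp)
    have hd : (G.induce S).Adj ⟨s, hs⟩ ⟨b, hb⟩ := h
    exact hd.reachable.trans (ih (fun x hx => hsup x (by simp [hx])) hb ht)

lemma reach_iff {G : SimpleGraph V} {S : Set V} {s t : V} (hs : s ∈ S) (ht : t ∈ S) :
    (G.induce S).Reachable ⟨s, hs⟩ ⟨t, ht⟩ ↔ ∃ w : G.Walk s t, ∀ x ∈ w.support, x ∈ S :=
  ⟨fun ⟨p⟩ => induced_walk_to_walk p, fun ⟨w, hw⟩ => walk_to_induced w hw hs ht⟩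

lemma split_walk {G : SimpleGraph V} {M : Set V} {v x : V} (hv : v ∈ M) (hx : x ∈ (Mᶜ : Set V))
    (r : G.Walk v x) (hr : r.IsPath) (hsup : ∀ y ∈ r.support, y ∈ ((M \ {v})ᶜ : Set V)) :
    ∃ u, G.Adj v u ∧ ∃ w : G.Walk u x, ∀ y ∈ w.support, y ∈ (Mᶜ : Set V) := by
  cases r with
  | nil => exact absurd hv hx
  | @cons _ u _ h q =>
    refine ⟨u, h, q, fun y hy => ?_⟩
    have hvq : v ∉ q.support := by
      have := (Walk.isPath_def _).mp hr
      simp only [Walk.support_cons, List.nodup_cons] at this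
      exact this.1
    have hyv : y ≠ v := fun h' => hvq (h' ▸ hy)
    have := hsup y (by simp [Walk.support_cons, hy])
    simp only [Set.mem_compl_iff, Set.mem_diff, Set.mem_singleton_iff, not_and, not_not] at this
    exact fun hyM => hyv (this hyM)


/-- A node multicut `M` of `(G, B)` is minimal if and only if there is a
family `𝒞` of connected components of `G - M`, each containing at least one terminal, such
that (1) no component of `𝒞` contains both vertices of a terminal pair, and (2) every
`v ∈ M` has a neighbor in the component of `𝒞` containing `s` and in the component of `𝒞`
containing `t`, for some terminal pair `{s, t} ∈ B`. -/
theorem minimal_node_multicut_iff (G : SimpleGraph V) (B : Set (V × V)) (M : Set V)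
    (hM : IsNodeMulticut G B M) :
    IsMinNodeMulticut G B M ↔
      ∃ 𝒞 : Set (Set V),
        (∀ C ∈ 𝒞, IsCompOf G M C ∧ (C ∩ terminalSet B).Nonempty) ∧
        (∀ C ∈ 𝒞, ∀ p ∈ B, ¬ (p.1 ∈ C ∧ p.2 ∈ C)) ∧
        (∀ v ∈ M, ∃ p ∈ B, ∃ Cs ∈ 𝒞, ∃ Ct ∈ 𝒞, p.1 ∈ Cs ∧ p.2 ∈ Ct ∧
          (∃ u ∈ Cs, G.Adj v u) ∧ (∃ u ∈ Ct, G.Adj v u)) := by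
  classical
  constructor
  · rintro ⟨-, hmin⟩
    refine ⟨{C | IsCompOf G M C ∧ (C ∩ terminalSet B).Nonempty}, fun C hC => hC, ?_, ?_⟩
    · rintro C ⟨⟨c, rfl⟩, -⟩ p hp ⟨h1, h2⟩
      obtain ⟨⟨x, hx⟩, hxc, hx1⟩ := h1
      obtain ⟨⟨y, hy⟩, hyc, hy2⟩ := h2
      simp only at hx1 hy2
      subst hx1; subst hy2
      rw [ConnectedComponent.mem_supp_iff] at hxc hyc
      exact hM.2 p hp hx hy (ConnectedComponent.eq.mp (hxc.trans hyc.symm))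
    · intro v hv
      have hnot := hmin (M \ {v}) (Set.sdiff_singleton_ssubset.mpr hv)
      rw [IsNodeMulticut] at hnot
      push_neg at hnot
      obtain ⟨p, hp, hsep⟩ := hnot (Set.diff_subset.trans hM.1)
      rw [SepSets] at hsep
      push_neg at hsep
      obtain ⟨hs, ht, hr⟩ := hsep
      have hsT : p.1 ∈ terminalSet B := ⟨p, hp, Or.inl rfl⟩
      have htT : p.2 ∈ terminalSet B := ⟨p, hp, Or.inr rfl⟩
      have hsM : p.1 ∈ (Mᶜ : Set V) := fun h => hM.1 h hsT
      have htM : p.2 ∈ (Mᶜ : Set V) := fun h => hM.1 h htT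
      obtain ⟨w0, hw0⟩ := (reach_iff hs ht).mp hr
      set P := w0.bypass with hP
      have hPpath : P.IsPath := w0.bypass_isPath
      have hPsup : ∀ x ∈ P.support, x ∈ ((M \ {v})ᶜ : Set V) :=
        fun x hx => hw0 x (w0.support_bypass_subset hx)
      have hvP : v ∈ P.support := by
        by_contra hvP
        refine hM.2 p hp hsM htM (walk_to_induced P (fun x hx => ?_) hsM htM)
        have := hPsup x hx
        have hxv : x ≠ v := fun h' => hvP (h' ▸ hx)
        simp only [Set.mem_compl_iff, Set.mem_diff, Set.mem_singleton_iff, not_and, not_not]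
          at this
        exact fun hxM => hxv (this hxM)
      obtain ⟨u1, hadj1, w1, hw1⟩ := split_walk hv hsM (P.takeUntil v hvP).reverse
        (hPpath.takeUntil hvP).reverse
        (fun y hy => hPsup y (P.support_takeUntil_subset hvP (by simpa using hy)))
      obtain ⟨u2, hadj2, w2, hw2⟩ := split_walk hv htM (P.dropUntil v hvP)
        (hPpath.dropUntil hvP)
        (fun y hy => hPsup y (P.support_dropUntil_subset hvP hy))
      have hu1 : u1 ∈ (Mᶜ : Set V) := hw1 u1 w1.start_mem_support
      have hu2 : u2 ∈ (Mᶜ : Set V) := hw2 u2 w2.start_mem_support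
      refine ⟨p, hp,
        Subtype.val '' ((G.induce (Mᶜ : Set V)).connectedComponentMk ⟨p.1, hsM⟩).supp,
        ⟨⟨_, rfl⟩, ⟨p.1, ⟨⟨p.1, hsM⟩, by rw [ConnectedComponent.mem_supp_iff], rfl⟩, hsT⟩⟩,
        Subtype.val '' ((G.induce (Mᶜ : Set V)).connectedComponentMk ⟨p.2, htM⟩).supp,
        ⟨⟨_, rfl⟩, ⟨p.2, ⟨⟨p.2, htM⟩, by rw [ConnectedComponent.mem_supp_iff], rfl⟩, htT⟩⟩,
        ⟨⟨p.1, hsM⟩, by rw [ConnectedComponent.mem_supp_iff], rfl⟩,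
        ⟨⟨p.2, htM⟩, by rw [ConnectedComponent.mem_supp_iff], rfl⟩,
        ⟨u1, ⟨⟨u1, hu1⟩, ?_, rfl⟩, hadj1⟩, ⟨u2, ⟨⟨u2, hu2⟩, ?_, rfl⟩, hadj2⟩⟩
      · rw [ConnectedComponent.mem_supp_iff]
        exact ConnectedComponent.sound (walk_to_induced w1 hw1 hu1 hsM)
      · rw [ConnectedComponent.mem_supp_iff]
        exact ConnectedComponent.sound (walk_to_induced w2 hw2 hu2 htM)
  · rintro ⟨𝒞, h𝒞, hpair, hcov⟩
    refine ⟨hM, fun M' hM'sub hM' => ?_⟩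
    obtain ⟨v, hvM, hvM'⟩ := Set.exists_of_ssubset hM'sub
    obtain ⟨p, hp, Cs, hCs, Ct, hCt, hs, ht, ⟨u1, hu1, hadj1⟩, ⟨u2, hu2, hadj2⟩⟩ := hcov v hvM
    obtain ⟨c, rfl⟩ := (h𝒞 Cs hCs).1
    obtain ⟨d, rfl⟩ := (h𝒞 Ct hCt).1
    obtain ⟨⟨s1, hs1⟩, hs1c, hs1eq⟩ := hs
    obtain ⟨⟨a1, ha1⟩, ha1c, ha1eq⟩ := hu1
    obtain ⟨⟨t1, ht1⟩, ht1d, ht1eq⟩ := ht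
    obtain ⟨⟨a2, ha2⟩, ha2d, ha2eq⟩ := hu2
    simp only at hs1eq ha1eq ht1eq ha2eq
    subst hs1eq; subst ha1eq; subst ht1eq; subst ha2eq
    rw [ConnectedComponent.mem_supp_iff] at hs1c ha1c ht1d ha2d
    obtain ⟨w1, hw1⟩ := (reach_iff hs1 ha1).mp
      (ConnectedComponent.eq.mp (hs1c.trans ha1c.symm))
    obtain ⟨w2, hw2⟩ := (reach_iff ha2 ht1).mp
      (ConnectedComponent.eq.mp (ha2d.trans ht1d.symm))
    have hM'M : M' ⊆ M := hM'sub.subset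
    have hsT : p.1 ∈ terminalSet B := ⟨p, hp, Or.inl rfl⟩
    have htT : p.2 ∈ terminalSet B := ⟨p, hp, Or.inr rfl⟩
    have hsM' : p.1 ∈ (M'ᶜ : Set V) := fun h => hM'.1 h hsT
    have htM' : p.2 ∈ (M'ᶜ : Set V) := fun h => hM'.1 h htT
    refine hM'.2 p hp hsM' htM' (walk_to_induced
      (w1.append (Walk.cons hadj1.symm (Walk.cons hadj2 w2))) (fun x hx => ?_) hsM' htM')
    rw [Walk.mem_support_append_iff] at hx
    rcases hx with hx | hx
    · exact fun h => hw1 x hx (hM'M h)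
    · simp only [Walk.support_cons, List.mem_cons] at hx
      rcases hx with rfl | rfl | hx
      · exact fun h => ha1 (hM'M h)
      · exact hvM'
      · exact fun h => hw2 x hx (hM'M h)
end

section
/- Let M and M' be minimal node multicuts of (G,B). Define dist(M,M') = Σ_{C' ∈ C_{M'}} |C' \ μ(C',M)|, where C_{M'} is the set of components of G − M' containing at least one terminal, and μ(C',M) is a component C of G − M minimizing |C' \ C|. Then M = M' if and only if dist(M,M') = 0. -/
/-!
`dist(M, M') = 0` says exactly that every terminal component of `G - M'` lies inside a
component of `G - M`. Given this, take `v ∈ M' \ M`. By minimality of `M'` some terminal pair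
`s, t` is joined by a path avoiding `M' \ {v}`; it must pass through `v`, so `s` and `t` reach
neighbours `u, w` of `v` in `G - M'`, hence in `G - M`, and `s – u – v – w – t` joins them in
`G - M`, which is impossible. So `M' ⊆ M`, and minimality of `M` gives `M' = M`.
-/

open SimpleGraph Set

variable {V : Type*}

/-- `dist(M, M')`: the sum, over all components `C'` of `G - M'` containing a terminal, of
`|C' \ C|` where `C` is a component of `G - M` minimizing `|C' \ C|`. -/
noncomputable def mdist (G : SimpleGraph V) (T : Set V) (M M' : Set V) : ℕ :=
  ∑ᶠ C' ∈ {C' : Set V | IsCompOf G M' C' ∧ (C' ∩ T).Nonempty},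
    sInf {n : ℕ | ∃ C : Set V, IsCompOf G M C ∧ n = (C' \ C).ncard}

def ReachableAvoiding (G : SimpleGraph V) (S : Set V) (x y : V) : Prop :=
  ∃ p : G.Walk x y, ∀ z ∈ p.support, z ∉ S

namespace ReachableAvoiding

variable {G : SimpleGraph V} {S : Set V} {v x y z : V}

lemma left_notMem (h : ReachableAvoiding G S x y) : x ∉ S :=
  h.elim fun p hp => hp x p.start_mem_support

lemma right_notMem (h : ReachableAvoiding G S x y) : y ∉ S :=
  h.elim fun p hp => hp y p.end_mem_support

lemma refl (hx : x ∉ S) : ReachableAvoiding G S x x :=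
  ⟨.nil, by simpa using hx⟩

lemma of_adj (hx : x ∉ S) (hy : y ∉ S) (h : G.Adj x y) : ReachableAvoiding G S x y :=
  ⟨.cons h .nil, by simp [hx, hy]⟩

lemma symm (h : ReachableAvoiding G S x y) : ReachableAvoiding G S y x := by
  obtain ⟨p, hp⟩ := h
  exact ⟨p.reverse, by simpa using hp⟩

lemma trans (h₁ : ReachableAvoiding G S x y) (h₂ : ReachableAvoiding G S y z) :
    ReachableAvoiding G S x z := by
  obtain ⟨p, hp⟩ := h₁
  obtain ⟨q, hq⟩ := h₂
  refine ⟨p.append q, fun w hw => ?_⟩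
  rcases (p.mem_support_append_iff q).mp hw with hw | hw
  exacts [hp w hw, hq w hw]

/-- `w` is the vertex following the last visit of `v`. -/
lemma or_exists_adj_of_sdiff_singleton (h : ReachableAvoiding G (S \ {v}) x y) (hy : y ∉ S) :
    ReachableAvoiding G S x y ∨ ∃ w, G.Adj v w ∧ ReachableAvoiding G S w y := by
  obtain ⟨p, hp⟩ := h
  induction p with
  | nil => exact .inl (refl hy)
  | @cons a b _ hab p ih =>
    rcases ih hy fun z hz => hp z (p.support_subset_support_cons hab hz) with hb | hb
    · by_cases ha : a ∈ S
      · have hav : a = v := by simpa [ha] using hp a (p.cons hab).start_mem_support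
        exact .inr ⟨b, hav ▸ hab, hb⟩
      · exact .inl ((of_adj ha hb.left_notMem hab).trans hb)
    · exact .inr hb

lemma or_exists_adj_adj_of_sdiff_singleton (h : ReachableAvoiding G (S \ {v}) x y) (hx : x ∉ S)
    (hy : y ∉ S) :
    ReachableAvoiding G S x y ∨
      ∃ u w, G.Adj u v ∧ G.Adj v w ∧ ReachableAvoiding G S x u ∧ ReachableAvoiding G S w y := by
  rcases h.or_exists_adj_of_sdiff_singleton hy with hxy | ⟨w, hvw, hwy⟩
  · exact .inl hxy
  rcases h.symm.or_exists_adj_of_sdiff_singleton hx with hyx | ⟨u, hvu, hux⟩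
  · exact .inl hyx.symm
  exact .inr ⟨u, w, hvu.symm, hvw, hux.symm, hwy⟩

end ReachableAvoiding

lemma reachable_induce_compl_iff {G : SimpleGraph V} {S : Set V} {x y : (Sᶜ : Set V)} :
    (G.induce Sᶜ).Reachable x y ↔ ReachableAvoiding G S x y := by
  constructor
  · rintro ⟨p⟩
    refine ⟨p.map (SimpleGraph.Embedding.induce Sᶜ).toHom, fun z hz => ?_⟩
    obtain ⟨a, -, rfl⟩ := List.mem_map.mp ((p.support_map _) ▸ hz)
    exact a.2
  · rintro ⟨p, hp⟩
    exact ⟨p.induce Sᶜ hp⟩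

lemma sepSets_iff {G : SimpleGraph V} {M : Set V} {s t : V} :
    SepSets G M s t ↔ ¬ ReachableAvoiding G M s t := by
  refine ⟨fun h hst => h hst.left_notMem hst.right_notMem ?_, fun h hs ht hst => h ?_⟩
  · exact reachable_induce_compl_iff.mpr hst
  · exact reachable_induce_compl_iff (x := ⟨s, hs⟩) (y := ⟨t, ht⟩) |>.mp hst

lemma image_val_supp_connectedComponentMk {G : SimpleGraph V} {M : Set V} (x : (Mᶜ : Set V)) :
    Subtype.val '' ((G.induce Mᶜ).connectedComponentMk x).supp =
      {y | ReachableAvoiding G M x y} := by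
  ext y
  constructor
  · rintro ⟨y, hy, rfl⟩
    exact reachable_induce_compl_iff.mp (ConnectedComponent.exact hy).symm
  · intro hy
    refine ⟨⟨y, hy.right_notMem⟩, ConnectedComponent.sound ?_, rfl⟩
    exact (reachable_induce_compl_iff (y := ⟨y, hy.right_notMem⟩) |>.mpr hy).symm

lemma isCompOf_iff {G : SimpleGraph V} {M C : Set V} :
    IsCompOf G M C ↔ ∃ x ∉ M, C = {y | ReachableAvoiding G M x y} := by
  constructor
  · rintro ⟨c, rfl⟩
    induction c using ConnectedComponent.ind with
    | h x => exact ⟨x, x.2, image_val_supp_connectedComponentMk x⟩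
  · rintro ⟨x, hx, rfl⟩
    exact ⟨_, (image_val_supp_connectedComponentMk ⟨x, hx⟩).symm⟩

lemma sInf_ncard_sdiff_eq_zero_iff {P : Set V → Prop} {A : Set V} (hA : A.Finite)
    (hP : ∃ C, P C) :
    sInf {n : ℕ | ∃ C, P C ∧ n = (A \ C).ncard} = 0 ↔ ∃ C, P C ∧ A ⊆ C := by
  obtain ⟨C₀, hC₀⟩ := hP
  rw [Nat.sInf_eq_zero]
  constructor
  · rintro (⟨C, hC, h0⟩ | hempty)
    · exact ⟨C, hC, sdiff_eq_empty.mp ((ncard_eq_zero (hA.subset sdiff_subset)).mp h0.symm)⟩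
    · exact absurd hempty (nonempty_iff_ne_empty.mp ⟨_, C₀, hC₀, rfl⟩)
  · rintro ⟨C, hC, hAC⟩
    exact .inl ⟨C, hC, by simp [sdiff_eq_empty.mpr hAC]⟩

lemma mdist_eq_zero_iff [Finite V] {G : SimpleGraph V} {T M M' : Set V} (hT : T ⊆ Mᶜ) :
    mdist G T M M' = 0 ↔
      ∀ t ∈ T, ∀ y, ReachableAvoiding G M' t y → ReachableAvoiding G M t y := by
  have hcomp : ∀ t ∈ T, IsCompOf G M {y | ReachableAvoiding G M t y} :=
    fun t ht => isCompOf_iff.mpr ⟨t, hT ht, rfl⟩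
  rw [mdist, finsum_mem_eq_finite_toFinset_sum _ (toFinite _), Finset.sum_eq_zero_iff]
  simp only [Finite.mem_toFinset, mem_ofPred_eq, and_imp]
  constructor
  · intro h t ht y hty
    have htt := ReachableAvoiding.refl (G := G) hty.left_notMem
    obtain ⟨C, hC, hsub⟩ := (sInf_ncard_sdiff_eq_zero_iff (toFinite _) ⟨_, hcomp t ht⟩).mp <|
      h _ (isCompOf_iff.mpr ⟨t, hty.left_notMem, rfl⟩) ⟨t, htt, ht⟩
    obtain ⟨x, -, rfl⟩ := isCompOf_iff.mp hC
    exact (hsub htt).symm.trans (hsub hty)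
  · rintro h C' hC' ⟨t, htC', ht⟩
    obtain ⟨x, -, rfl⟩ := isCompOf_iff.mp hC'
    refine (sInf_ncard_sdiff_eq_zero_iff (toFinite _) ⟨_, hcomp t ht⟩).mpr ?_
    exact ⟨_, hcomp t ht, fun y hy => h t ht y (htC'.symm.trans hy)⟩

section Multicut

variable {G : SimpleGraph V} {B : Set (V × V)} {M M' : Set V}

lemma fst_mem_terminalSet {p : V × V} (hp : p ∈ B) : p.1 ∈ terminalSet B := ⟨p, hp, .inl rfl⟩

lemma snd_mem_terminalSet {p : V × V} (hp : p ∈ B) : p.2 ∈ terminalSet B := ⟨p, hp, .inr rfl⟩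

lemma IsNodeMulticut.terminalSet_subset_compl (hM : IsNodeMulticut G B M) :
    terminalSet B ⊆ Mᶜ :=
  subset_compl_comm.mp hM.1

lemma IsNodeMulticut.not_reachableAvoiding (hM : IsNodeMulticut G B M) {p : V × V}
    (hp : p ∈ B) : ¬ ReachableAvoiding G M p.1 p.2 :=
  sepSets_iff.mp (hM.2 p hp)

lemma IsMinNodeMulticut.exists_reachableAvoiding_sdiff_singleton (hM : IsMinNodeMulticut G B M)
    {v : V} (hv : v ∈ M) : ∃ p ∈ B, ReachableAvoiding G (M \ {v}) p.1 p.2 := by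
  by_contra! hsep
  exact hM.2 (M \ {v}) (sdiff_singleton_ssubset.mpr hv)
    ⟨sdiff_subset.trans hM.1.1, fun p hp => sepSets_iff.mpr (hsep p hp)⟩

lemma IsMinNodeMulticut.subset_of_forall_reachableAvoiding (hM' : IsMinNodeMulticut G B M')
    (hM : IsNodeMulticut G B M)
    (h : ∀ t ∈ terminalSet B, ∀ y, ReachableAvoiding G M' t y → ReachableAvoiding G M t y) :
    M' ⊆ M := by
  intro v hv
  by_contra hvM
  obtain ⟨⟨s, t⟩, hst, hreach⟩ := hM'.exists_reachableAvoiding_sdiff_singleton hv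
  have hs := fst_mem_terminalSet hst
  have ht := snd_mem_terminalSet hst
  rcases hreach.or_exists_adj_adj_of_sdiff_singleton (hM'.1.terminalSet_subset_compl hs)
    (hM'.1.terminalSet_subset_compl ht) with hst' | ⟨u, w, huv, hvw, hsu, hwt⟩
  · exact hM'.1.not_reachableAvoiding hst hst'
  have hsu' := h s hs u hsu
  have hwt' := (h t ht w hwt.symm).symm
  refine hM.not_reachableAvoiding hst (hsu'.trans ?_)
  exact (ReachableAvoiding.of_adj hsu'.right_notMem hvM huv).trans
    ((ReachableAvoiding.of_adj hvM hwt'.left_notMem hvw).trans hwt')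

end Multicut

/-- For minimal node multicuts `M` and `M'` of `(G, B)`,
`M = M'` if and only if `dist(M, M') = 0`. -/
theorem eq_iff_mdist_eq_zero [Fintype V] (G : SimpleGraph V) (B : Set (V × V)) (M M' : Set V)
    (hM : IsMinNodeMulticut G B M) (hM' : IsMinNodeMulticut G B M') :
    M = M' ↔ mdist G (terminalSet B) M M' = 0 := by
  rw [mdist_eq_zero_iff hM.1.terminalSet_subset_compl]
  refine ⟨fun h => h ▸ fun _ _ _ => id, fun h => ?_⟩
  have hsub : M' ⊆ M := hM'.subset_of_forall_reachableAvoiding hM.1 h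
  by_contra hne
  exact hM.2 M' (hsub.ssubset_of_ne (Ne.symm hne)) hM'.1
end

section
/- Let M be a node multicut of (G,B), let comp(M) ⊆ M be any minimal node multicut of (G,B) contained in M, and let M' be a minimal node multicut of (G,B). Then dist(comp(M),M') ≤ dist(M,M'), where dist(M,M') = Σ_{C' ∈ C_{M'}} |C' \ μ(C',M)| with μ(C',M) a component of G − M minimizing |C' \ C|. -/
open SimpleGraph Set

variable {V : Type*}

lemma reachable_mono {G : SimpleGraph V} {M₀ M : Set V} (hsub : M₀ ⊆ M)
    {a b : (Mᶜ : Set V)} (h : (G.induce (Mᶜ : Set V)).Reachable a b) :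
    (G.induce (M₀ᶜ : Set V)).Reachable ⟨a.1, fun ha => a.2 (hsub ha)⟩
      ⟨b.1, fun hb => b.2 (hsub hb)⟩ := by
  let f : G.induce (Mᶜ : Set V) →g G.induce (M₀ᶜ : Set V) :=
    { toFun := fun x => ⟨x.1, fun hx => x.2 (hsub hx)⟩,
      map_rel' := fun hadj => hadj }
  exact h.map f

/-- If `M` is a node multicut of `(G, B)`, `M₀ ⊆ M` is a minimal node
multicut of `(G, B)` (a possible value of `comp(M)`), and `M'` is a minimal node multicut,
then `dist(M₀, M') ≤ dist(M, M')`. -/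
theorem mdist_comp_le [Fintype V] (G : SimpleGraph V) (B : Set (V × V)) (M M₀ M' : Set V)
    (hM : IsNodeMulticut G B M) (hM₀ : IsMinNodeMulticut G B M₀) (hsub : M₀ ⊆ M)
    (hM' : IsMinNodeMulticut G B M') :
    mdist G (terminalSet B) M₀ M' ≤ mdist G (terminalSet B) M M' := by
  classical
  unfold mdist
  have hSfin : {C' : Set V | IsCompOf G M' C' ∧ (C' ∩ terminalSet B).Nonempty}.Finite :=
    Set.toFinite _
  rw [finsum_mem_eq_finite_toFinset_sum _ hSfin, finsum_mem_eq_finite_toFinset_sum _ hSfin]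
  apply Finset.sum_le_sum
  intro C' hC'
  rw [Set.Finite.mem_toFinset] at hC'
  obtain ⟨_, t, htC', htT⟩ := hC'
  have htM : t ∈ (Mᶜ : Set V) := fun h => hM.1 h htT
  have hne : {n : ℕ | ∃ C : Set V, IsCompOf G M C ∧ n = (C' \ C).ncard}.Nonempty :=
    ⟨_, _, ⟨(G.induce (Mᶜ : Set V)).connectedComponentMk ⟨t, htM⟩, rfl⟩, rfl⟩
  obtain ⟨C, ⟨c, hc⟩, hn⟩ := Nat.sInf_mem hne
  obtain ⟨v, hv⟩ := c.exists_rep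
  have htM0 : v.1 ∈ (M₀ᶜ : Set V) := fun h => v.2 (hsub h)
  set c₀ := (G.induce (M₀ᶜ : Set V)).connectedComponentMk ⟨v.1, htM0⟩ with hc₀
  have hCC₀ : C ⊆ Subtype.val '' c₀.supp := by
    rw [hc]
    rintro _ ⟨x, hx, rfl⟩
    rw [SimpleGraph.ConnectedComponent.mem_supp_iff] at hx
    refine ⟨⟨x.1, fun h => x.2 (hsub h)⟩, ?_, rfl⟩
    rw [SimpleGraph.ConnectedComponent.mem_supp_iff, hc₀, SimpleGraph.ConnectedComponent.eq]
    have : (G.induce (Mᶜ : Set V)).Reachable x v := by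
      rw [← SimpleGraph.ConnectedComponent.eq, hx]
      exact hv.symm
    exact reachable_mono hsub this
  refine le_trans (Nat.sInf_le ⟨_, ⟨c₀, rfl⟩, rfl⟩) ?_
  rw [hn]
  exact Set.ncard_le_ncard (Set.diff_subset_diff_right hCC₀) (Set.toFinite _)
end

section
/- Let t₁, t₂ be adjacent terminals in G with {t₁,t₂} ∉ B. Then M is a minimal node multicut of (G,B) if and only if M is a minimal node multicut of (G/e, B'), where e = {t₁,t₂}, G/e is the graph obtained by contracting e, and B' is obtained from B by replacing t₁ and t₂ with the contracted vertex v_e. -/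
/-!
A multicut never contains the terminals `t₁, t₂`, and on sets avoiding them the contraction
map `f` (which identifies `t₂` with `t₁`) changes nothing that matters: `f` is injective
there, and `s, t` are connected in `G - N` iff `f s, f t` are connected in `G/e - f(N)`, since
a walk in `G - N` maps to one in `G/e - f(N)` (the edge `t₁t₂` collapsing to a point) and an
edge of `G/e` at `v_e` lifts to a path of length at most two through `t₂`. Hence `N ↦ f(N)`
is an inclusion-preserving bijection between the multicuts contained in `M` and those
contained in `f(M)`, so minimality transfers.
-/

open SimpleGraph Set

variable {V : Type*}

/-- The graph `G / e` obtained by contracting the edge `e = {t₁, t₂}`: the vertex `t₂` is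
removed and `t₁` plays the role of the contracted vertex `v_e`, which is adjacent to every
former neighbor of `t₁` or `t₂`. -/
def contractGraph (G : SimpleGraph V) (t₁ t₂ : V) : SimpleGraph {v : V // v ≠ t₂} where
  Adj a b := a ≠ b ∧
    (G.Adj a.1 b.1 ∨ (a.1 = t₁ ∧ G.Adj t₂ b.1) ∨ (b.1 = t₁ ∧ G.Adj a.1 t₂))
  symm := ⟨by
    rintro a b ⟨hab, h | h | h⟩
    · exact ⟨hab.symm, Or.inl h.symm⟩
    · exact ⟨hab.symm, Or.inr (Or.inr ⟨h.1, h.2.symm⟩)⟩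
    · exact ⟨hab.symm, Or.inr (Or.inl ⟨h.1, h.2.symm⟩)⟩⟩
  loopless := ⟨fun a h => h.1 rfl⟩

/-- The canonical map `V → V(G / e)` sending `t₂` to the contracted vertex (represented by
`t₁`) and every other vertex to itself. -/
noncomputable def contractMap (t₁ t₂ : V) (h : t₁ ≠ t₂) : V → {v : V // v ≠ t₂} :=
  open Classical in
  fun v => if hv : v = t₂ then ⟨t₁, h⟩ else ⟨v, hv⟩

namespace SimpleGraph

variable {W : Type*} {G : SimpleGraph V} {H : SimpleGraph W}

theorem Reachable.map_of_adj_reachable (f : V → W)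
    (hf : ∀ a b, G.Adj a b → H.Reachable (f a) (f b)) {x y : V} (h : G.Reachable x y) :
    H.Reachable (f x) (f y) := by
  obtain ⟨w⟩ := h
  induction w with
  | nil => rfl
  | cons hadj _ ih => exact (hf _ _ hadj).trans ih

theorem reachable_iff_of_adj_reachable (φ : V → W) (ψ : W → V)
    (hφ : ∀ a b, G.Adj a b → H.Reachable (φ a) (φ b))
    (hψ : ∀ a b, H.Adj a b → G.Reachable (ψ a) (ψ b))
    (hψφ : ∀ x, G.Reachable x (ψ (φ x))) {x y : V} :
    G.Reachable x y ↔ H.Reachable (φ x) (φ y) :=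
  ⟨(·.map_of_adj_reachable φ hφ), fun h =>
    (hψφ x).trans ((h.map_of_adj_reachable ψ hψ).trans (hψφ y).symm)⟩

end SimpleGraph

theorem Set.minimal_iff_minimal_image {α β : Type*} {P : Set α → Prop} {Q : Set β → Prop}
    {f : α → β} (hPQ : ∀ N, P N ↔ Q (f '' N)) (hinj : ∀ N, P N → InjOn f N) {M : Set α} :
    Minimal P M ↔ Minimal Q (f '' M) := by
  rw [minimal_iff_forall_ssubset, minimal_iff_forall_ssubset, ← hPQ]
  refine and_congr_right fun hM => ⟨fun h N' hN' hQ => ?_, fun h N hN hP => ?_⟩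
  · obtain ⟨N, hNM, rfl⟩ := subset_image_iff.mp hN'.subset
    exact h (((hinj M hM).image_ssubset_image_iff hNM subset_rfl).mp hN') ((hPQ N).mpr hQ)
  · exact h (((hinj M hM).image_ssubset_image_iff hN.subset subset_rfl).mpr hN) ((hPQ N).mp hP)

theorem terminalSet_image {W : Type*} (f : V → W) (B : Set (V × V)) :
    terminalSet ((fun p => (f p.1, f p.2)) '' B) = f '' terminalSet B := by
  ext w
  simp only [terminalSet, mem_image, mem_ofPred_eq]
  grind

theorem isMinNodeMulticut_iff_minimal (G : SimpleGraph V) (B : Set (V × V)) (M : Set V) :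
    IsMinNodeMulticut G B M ↔ Minimal (IsNodeMulticut G B) M := by
  rw [minimal_iff_forall_ssubset]
  rfl

section Contraction

variable {G : SimpleGraph V} {t₁ t₂ : V} {N : Set V}

theorem contractMap_coe (h : t₁ ≠ t₂) (v : {v : V // v ≠ t₂}) : contractMap t₁ t₂ h v = v :=
  dif_neg v.2

theorem contractMap_injOn (h : t₁ ≠ t₂) : InjOn (contractMap t₁ t₂ h) {t₂}ᶜ := by
  intro u hu v hv huv
  rw [mem_compl_singleton_iff] at hu hv
  simpa [contractMap, hu, hv] using huv

theorem contractMap_mem_image_iff (h : t₁ ≠ t₂) {S : Set V} (hS : t₁ ∈ S ↔ t₂ ∈ S) (v : V) :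
    contractMap t₁ t₂ h v ∈ contractMap t₁ t₂ h '' S ↔ v ∈ S := by
  simp only [mem_image, contractMap, Subtype.ext_iff]
  grind

theorem contractMap_eq_or_adj {a c : V} (h : t₁ ≠ t₂) (hac : G.Adj a c) :
    contractMap t₁ t₂ h a = contractMap t₁ t₂ h c ∨
      (contractGraph G t₁ t₂).Adj (contractMap t₁ t₂ h a) (contractMap t₁ t₂ h c) := by
  by_cases he : contractMap t₁ t₂ h a = contractMap t₁ t₂ h c
  · exact .inl he
  · refine .inr ⟨he, ?_⟩
    simp only [contractMap, Subtype.ext_iff] at he ⊢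
    split_ifs at he ⊢ <;> grind [G.loopless, G.symm]

theorem contractMap_coe_eq_or_adj (hadj : G.Adj t₁ t₂) (v : V) :
    (contractMap t₁ t₂ hadj.ne v : V) = v ∨ G.Adj v (contractMap t₁ t₂ hadj.ne v) := by
  unfold contractMap
  split_ifs with hv
  · exact .inr (hv ▸ hadj.symm)
  · exact .inl rfl

theorem adj_or_adj_adj_of_contractGraph_adj (hadj : G.Adj t₁ t₂) {a c : {v : V // v ≠ t₂}}
    (h : (contractGraph G t₁ t₂).Adj a c) : G.Adj a c ∨ G.Adj a t₂ ∧ G.Adj t₂ c := by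
  obtain ⟨-, h | ⟨ha, hc⟩ | ⟨hc, ha⟩⟩ := h
  · exact .inl h
  · exact .inr ⟨ha ▸ hadj, hc⟩
  · exact .inr ⟨ha, hc ▸ hadj.symm⟩

theorem reachable_contract_iff (hadj : G.Adj t₁ t₂) (hN₁ : t₁ ∉ N) (hN₂ : t₂ ∉ N)
    {s t : V} (hs : s ∈ Nᶜ) (ht : t ∈ Nᶜ)
    (hs' : contractMap t₁ t₂ hadj.ne s ∈ (contractMap t₁ t₂ hadj.ne '' N)ᶜ)
    (ht' : contractMap t₁ t₂ hadj.ne t ∈ (contractMap t₁ t₂ hadj.ne '' N)ᶜ) :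
    (G.induce Nᶜ).Reachable ⟨s, hs⟩ ⟨t, ht⟩ ↔
      ((contractGraph G t₁ t₂).induce (contractMap t₁ t₂ hadj.ne '' N)ᶜ).Reachable
        ⟨_, hs'⟩ ⟨_, ht'⟩ := by
  have hN : t₁ ∈ N ↔ t₂ ∈ N := iff_of_false hN₁ hN₂
  have hφ : MapsTo (contractMap t₁ t₂ hadj.ne) Nᶜ (contractMap t₁ t₂ hadj.ne '' N)ᶜ :=
    fun v hv => (contractMap_mem_image_iff hadj.ne hN v).not.mpr hv
  have hψ : MapsTo Subtype.val (contractMap t₁ t₂ hadj.ne '' N)ᶜ Nᶜ := fun v hv hvN =>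
    hv (contractMap_coe hadj.ne v ▸ mem_image_of_mem _ hvN)
  refine reachable_iff_of_adj_reachable (hφ.restrict _ _ _) (hψ.restrict _ _ _) ?_ ?_ ?_
  · intro a c hac
    rcases contractMap_eq_or_adj hadj.ne hac with he | he
    · have he : hφ.restrict _ _ _ a = hφ.restrict _ _ _ c := Subtype.ext he
      exact he ▸ .rfl
    · exact Adj.reachable he
  · intro a c hac
    rcases adj_or_adj_adj_of_contractGraph_adj hadj hac with h | ⟨ha, hc⟩
    · exact Adj.reachable h
    · let u : ↥Nᶜ := ⟨t₂, hN₂⟩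
      exact (Adj.reachable (v := u) ha).trans (Adj.reachable (u := u) hc)
  · intro x
    rcases contractMap_coe_eq_or_adj hadj x.1 with h | h
    · have h : x = hψ.restrict _ _ _ (hφ.restrict _ _ _ x) := Subtype.ext h.symm
      exact h ▸ .rfl
    · exact Adj.reachable h

theorem sepSets_contract_iff (hadj : G.Adj t₁ t₂) (hN₁ : t₁ ∉ N) (hN₂ : t₂ ∉ N) (s t : V) :
    SepSets G N s t ↔ SepSets (contractGraph G t₁ t₂) (contractMap t₁ t₂ hadj.ne '' N)
      (contractMap t₁ t₂ hadj.ne s) (contractMap t₁ t₂ hadj.ne t) := by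
  have hmem : ∀ v, contractMap t₁ t₂ hadj.ne v ∈ (contractMap t₁ t₂ hadj.ne '' N)ᶜ ↔ v ∈ Nᶜ :=
    fun v => (contractMap_mem_image_iff hadj.ne (iff_of_false hN₁ hN₂) v).not
  refine ⟨fun h hs' ht' hr => ?_, fun h hs ht hr => ?_⟩
  · exact h ((hmem s).mp hs') ((hmem t).mp ht')
      ((reachable_contract_iff hadj hN₁ hN₂ _ _ hs' ht').mpr hr)
  · exact h ((hmem s).mpr hs) ((hmem t).mpr ht)
      ((reachable_contract_iff hadj hN₁ hN₂ hs ht _ _).mp hr)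

theorem isNodeMulticut_contract_iff {B : Set (V × V)} (hadj : G.Adj t₁ t₂)
    (ht₁ : t₁ ∈ terminalSet B) (ht₂ : t₂ ∈ terminalSet B) (N : Set V) :
    IsNodeMulticut G B N ↔
      IsNodeMulticut (contractGraph G t₁ t₂)
        ((fun p => (contractMap t₁ t₂ hadj.ne p.1, contractMap t₁ t₂ hadj.ne p.2)) '' B)
        (contractMap t₁ t₂ hadj.ne '' N) := by
  have hT : contractMap t₁ t₂ hadj.ne ⁻¹' (contractMap t₁ t₂ hadj.ne '' terminalSet B) =
      terminalSet B :=
    ext (contractMap_mem_image_iff hadj.ne (iff_of_true ht₁ ht₂))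
  rw [IsNodeMulticut, IsNodeMulticut, terminalSet_image, image_subset_iff, preimage_compl, hT,
    forall_mem_image]
  exact and_congr_right fun hN => forall₂_congr fun p _ =>
    sepSets_contract_iff hadj (fun h => hN h ht₁) (fun h => hN h ht₂) p.1 p.2

end Contraction

theorem min_node_multicut_contract_general (G : SimpleGraph V) (B : Set (V × V)) (M : Set V)
    (t₁ t₂ : V) (hadj : G.Adj t₁ t₂)
    (ht₁ : t₁ ∈ terminalSet B) (ht₂ : t₂ ∈ terminalSet B) :
    IsMinNodeMulticut G B M ↔
      IsMinNodeMulticut (contractGraph G t₁ t₂)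
        ((fun p => (contractMap t₁ t₂ hadj.ne p.1, contractMap t₁ t₂ hadj.ne p.2)) '' B)
        (contractMap t₁ t₂ hadj.ne '' M) := by
  rw [isMinNodeMulticut_iff_minimal, isMinNodeMulticut_iff_minimal]
  refine minimal_iff_minimal_image (isNodeMulticut_contract_iff hadj ht₁ ht₂) fun N hN => ?_
  exact (contractMap_injOn hadj.ne).mono fun v hv (hv₂ : v = t₂) => hN.1 hv (hv₂ ▸ ht₂)

/-- If `t₁` and `t₂` are adjacent terminals with `{t₁, t₂} ∉ B`, then `M`
is a minimal node multicut of `(G, B)` if and only if (the image of) `M` is a minimal node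
multicut of `(G / e, B')`, where `e = {t₁, t₂}` and `B'` is obtained from `B` by replacing
`t₁` and `t₂` with the contracted vertex. -/
theorem min_node_multicut_contract (G : SimpleGraph V) (B : Set (V × V)) (M : Set V)
    (t₁ t₂ : V) (hadj : G.Adj t₁ t₂)
    (ht₁ : t₁ ∈ terminalSet B) (ht₂ : t₂ ∈ terminalSet B)
    (hB : (t₁, t₂) ∉ B ∧ (t₂, t₁) ∉ B) :
    IsMinNodeMulticut G B M ↔
      IsMinNodeMulticut (contractGraph G t₁ t₂)
        ((fun p => (contractMap t₁ t₂ hadj.ne p.1, contractMap t₁ t₂ hadj.ne p.2)) '' B)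
        (contractMap t₁ t₂ hadj.ne '' M) :=
  min_node_multicut_contract_general G B M t₁ t₂ hadj ht₁ ht₂
end

section
/- Let M be a minimal node multicut of (G,B), C' a component of G − M' for another minimal node multicut M', and C = μ(C',M) the component of G − M closest to C'. Suppose v ∈ N(C) ∩ C' ⊆ M is such that the induced subgraph G[N[v] ∪ C] contains no terminal pair of B, and let T_v = N(v) ∩ T. Then M'' = (M \ {v}) ∪ (N(T_v ∪ {v}) \ C) is a node multicut of (G,B). -/
open SimpleGraph Set

variable {V : Type*}

/-!
Put `S = T_v ∪ {v}` and `K = S ∪ C`. Every edge leaving `K` ends in `M''`: an edge leaving `S`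
ends in `N(S) \ C ⊆ M''` or in `C`, and an edge leaving the component `C` of `G - M` ends in
`M`, hence in `M \ {v} ⊆ M''` unless it ends at `v ∈ S`. So a walk of `G - M''` through `v`
stays in `K ⊆ N[v] ∪ C`, and if it joined a terminal pair, `G[N[v] ∪ C]` would contain that
pair. A walk of `G - M''` avoiding `v` avoids `M ⊆ M'' ∪ {v}`, so it cannot join a terminal pair
because `M` is a multicut. Finally `M''` contains no terminal since terminals are pairwise
non-adjacent and every terminal neighbour of `v` lies in `S`.
-/

namespace SimpleGraph

variable {G : SimpleGraph V}

lemma reachable_induce_iff {s : Set V} {a b : V} (ha : a ∈ s) (hb : b ∈ s) :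
    (G.induce s).Reachable ⟨a, ha⟩ ⟨b, hb⟩ ↔ ∃ p : G.Walk a b, ∀ x ∈ p.support, x ∈ s := by
  constructor
  · rintro ⟨q⟩
    refine ⟨q.map (Embedding.induce s).toHom, fun x hx => ?_⟩
    replace hx : x ∈ (q.map (Embedding.induce s).toHom).support := hx
    rw [Walk.support_map, List.mem_map] at hx
    obtain ⟨y, -, rfl⟩ := hx
    exact y.2
  · rintro ⟨p, hp⟩
    exact ⟨p.induce s hp⟩

lemma Walk.end_mem_of_adj_mem {K X : Set V} (hK : ∀ x ∈ K, ∀ y, G.Adj x y → y ∉ X → y ∈ K)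
    {a b : V} (p : G.Walk a b) (hp : ∀ x ∈ p.support, x ∉ X) (ha : a ∈ K) : b ∈ K := by
  induction p with
  | nil => exact ha
  | cons hadj q ih =>
    simp only [Walk.support_cons, List.mem_cons, forall_eq_or_imp] at hp
    exact ih hp.2 (hK _ ha _ hadj (hp.2 _ q.start_mem_support))

/-- The open neighbourhood `N(S)` of a vertex set `S`. -/
def setNbhd (G : SimpleGraph V) (S : Set V) : Set V := {w | w ∉ S ∧ ∃ u ∈ S, G.Adj u w}

end SimpleGraph

lemma IsCompOf.mem_of_adj {G : SimpleGraph V} {M C : Set V} (hC : IsCompOf G M C) {x y : V}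
    (hx : x ∈ C) (hxy : G.Adj x y) (hy : y ∉ M) : y ∈ C := by
  obtain ⟨c, rfl⟩ := hC
  obtain ⟨x', hx', rfl⟩ := hx
  refine ⟨⟨y, hy⟩, ?_, rfl⟩
  rw [ConnectedComponent.mem_supp_iff] at hx' ⊢
  rw [← hx']
  exact (ConnectedComponent.connectedComponentMk_eq_of_adj (induce_adj.2 hxy)).symm

section PushVertex

variable (G : SimpleGraph V) (B : Set (V × V)) (M C : Set V) (v : V)

/-- The set `T_v ∪ {v}`, where `T_v` is the set of terminals adjacent to `v`. -/
def terminalStar : Set V := insert v {u | G.Adj v u ∧ u ∈ terminalSet B}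

/-- The set `M''`. -/
def pushedCut : Set V := (M \ {v}) ∪ (G.setNbhd (terminalStar G B v) \ C)

variable {G B M C v}

lemma terminalStar_subset_closedNbhd : terminalStar G B v ⊆ insert v {u | G.Adj v u} :=
  insert_subset_insert fun _ hu => hu.1

lemma pushedCut_subset_compl_terminalSet
    (hnoadjT : ∀ a ∈ terminalSet B, ∀ b ∈ terminalSet B, ¬ G.Adj a b)
    (hM : M ⊆ (terminalSet B)ᶜ) : pushedCut G B M C v ⊆ (terminalSet B)ᶜ := by
  rintro w (⟨hwM, -⟩ | ⟨⟨hwS, u, hu, huw⟩, -⟩) hwT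
  · exact hM hwM hwT
  · rcases hu with rfl | ⟨-, huT⟩
    · exact hwS (Or.inr ⟨huw, hwT⟩)
    · exact hnoadjT u huT w hwT huw

lemma adj_mem_terminalStar_union_of_notMem_pushedCut (hC : IsCompOf G M C) {x y : V}
    (hx : x ∈ terminalStar G B v ∪ C) (hxy : G.Adj x y) (hy : y ∉ pushedCut G B M C v) :
    y ∈ terminalStar G B v ∪ C := by
  by_contra hyK
  rw [mem_union, not_or] at hyK
  rcases hx with hxS | hxC
  · exact hy (Or.inr ⟨⟨hyK.1, x, hxS, hxy⟩, hyK.2⟩)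
  · by_cases hyM : y ∈ M
    · have hyv : y ≠ v := by rintro rfl; exact hyK.1 (mem_insert y _)
      exact hy (Or.inl ⟨hyM, hyv⟩)
    · exact hyK.2 (hC.mem_of_adj hxC hxy hyM)

lemma SimpleGraph.Walk.end_mem_of_notMem_pushedCut (hC : IsCompOf G M C) {t : V}
    (q : G.Walk v t) (hq : ∀ x ∈ q.support, x ∉ pushedCut G B M C v) :
    t ∈ insert v {u | G.Adj v u} ∪ C :=
  union_subset_union_left C terminalStar_subset_closedNbhd <|
    q.end_mem_of_adj_mem
      (fun _ hx _ hxy hy => adj_mem_terminalStar_union_of_notMem_pushedCut hC hx hxy hy) hq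
      (Or.inl (mem_insert v _))

end PushVertex

theorem push_vertex_is_multicut_general (G : SimpleGraph V) (B : Set (V × V))
    (M C : Set V) (v : V)
    (hnoadjT : ∀ a ∈ terminalSet B, ∀ b ∈ terminalSet B, ¬ G.Adj a b)
    (hM : IsMinNodeMulticut G B M)
    (hCcomp : IsCompOf G M C)
    (hnoterm : ∀ p ∈ B,
      ¬ (p.1 ∈ insert v {u | G.Adj v u} ∪ C ∧ p.2 ∈ insert v {u | G.Adj v u} ∪ C)) :
    IsNodeMulticut G B ((M \ {v}) ∪
      ({w | w ∉ insert v {u | G.Adj v u ∧ u ∈ terminalSet B} ∧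
            ∃ u ∈ insert v {u | G.Adj v u ∧ u ∈ terminalSet B}, G.Adj u w} \ C)) := by
  classical
  show IsNodeMulticut G B (pushedCut G B M C v)
  refine ⟨pushedCut_subset_compl_terminalSet hnoadjT hM.1.1, fun p hp hs ht hreach => ?_⟩
  obtain ⟨W, hW⟩ := (reachable_induce_iff hs ht).1 hreach
  by_cases hv : v ∈ W.support
  · refine hnoterm p hp ⟨?_, ?_⟩
    · refine (W.takeUntil v hv).reverse.end_mem_of_notMem_pushedCut (B := B) hCcomp ?_
      intro x hx
      rw [Walk.support_reverse, List.mem_reverse] at hx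
      exact hW x (W.support_takeUntil_subset_support hv hx)
    · exact (W.dropUntil v hv).end_mem_of_notMem_pushedCut hCcomp
        fun x hx => hW x (W.support_dropUntil_subset_support hv hx)
  · have hWM : ∀ x ∈ W.support, x ∈ Mᶜ := fun x hx hxM =>
      hW x hx (Or.inl ⟨hxM, fun h => hv (h ▸ hx)⟩)
    exact hM.1.2 p hp (hWM _ W.start_mem_support) (hWM _ W.end_mem_support)
      ((reachable_induce_iff _ _).2 ⟨W, hWM⟩)

/-- Let `M, M'` be distinct minimal node multicuts of `(G, B)`, `C'` a
component of `G - M'` containing a terminal, `C = μ(C', M)` the component of `G - M`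
minimizing `|C' \ C|`, and `v ∈ N(C) ∩ C'`. If `G[N[v] ∪ C]` contains no terminal pair of
`B`, then `M'' = (M \ {v}) ∪ (N(T_v ∪ {v}) \ C)` is a node multicut of `(G, B)`, where
`T_v = N(v) ∩ T`. -/
theorem push_vertex_is_multicut [Fintype V] (G : SimpleGraph V) (B : Set (V × V))
    (M M' C' C : Set V) (v : V)
    (hnoadjT : ∀ a ∈ terminalSet B, ∀ b ∈ terminalSet B, ¬ G.Adj a b)
    (hnopairN : ∀ w : V, ¬ ∃ p ∈ B, G.Adj w p.1 ∧ G.Adj w p.2)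
    (hM : IsMinNodeMulticut G B M) (hM' : IsMinNodeMulticut G B M')
    (hC'comp : IsCompOf G M' C') (hC'term : (C' ∩ terminalSet B).Nonempty)
    (hCcomp : IsCompOf G M C)
    (hCmin : ∀ D : Set V, IsCompOf G M D → (C' \ C).ncard ≤ (C' \ D).ncard)
    (hvC' : v ∈ C') (hvnC : v ∉ C) (hvN : ∃ u ∈ C, G.Adj v u)
    (hnoterm : ∀ p ∈ B,
      ¬ (p.1 ∈ insert v {u | G.Adj v u} ∪ C ∧ p.2 ∈ insert v {u | G.Adj v u} ∪ C)) :
    IsNodeMulticut G B ((M \ {v}) ∪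
      ({w | w ∉ insert v {u | G.Adj v u ∧ u ∈ terminalSet B} ∧
            ∃ u ∈ insert v {u | G.Adj v u ∧ u ∈ terminalSet B}, G.Adj u w} \ C)) :=
  push_vertex_is_multicut_general G B M C v hnoadjT hM hCcomp hnoterm
end

section
/- Let M be a minimal node multiway cut of (G,T) with associated components C₁,…,C_k (C_i containing t_i), let 1 ≤ i ≤ k and v ∈ M with N(v) ∩ (T \ {t_i}) = ∅. Then M^{i,v} = (M \ {v}) ∪ (⋃_{j ≠ i} N(v) ∩ C_j) is a node multiway cut of (G,T). -/
/-!
Since `M^{i,v} ∪ {v} ⊇ M`, a walk joining two distinct terminals `t_a`, `t_b` in `G - M^{i,v}`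
must visit `v`. The vertex preceding its first visit to `v` is a neighbour of `v` reachable from
`t_a` in `G - M`, hence lies in `C_a`; as it survives in `G - M^{i,v}`, this forces `a = i`.
Reading the walk backwards gives `b = i` as well. Terminals stay outside `M^{i,v}` because the
only terminal neighbour `v` may have is `t_i`, which lies in no `C_j` with `j ≠ i`.
-/

open SimpleGraph Set

variable {V : Type*}

/-- `M` is a node multiway cut of `(G, T)`: a set of non-terminal vertices whose removal
disconnects every pair of distinct terminals. -/
def IsNodeMultiwayCut (G : SimpleGraph V) (T : Set V) (M : Set V) : Prop :=
  M ⊆ Tᶜ ∧ ∀ s ∈ T, ∀ u ∈ T, s ≠ u → SepSets G M s u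

/-- `M` is a minimal node multiway cut of `(G, T)`. -/
def IsMinNodeMultiwayCut (G : SimpleGraph V) (T : Set V) (M : Set V) : Prop :=
  IsNodeMultiwayCut G T M ∧ ∀ M' ⊂ M, ¬ IsNodeMultiwayCut G T M'

namespace SimpleGraph

def ReachableIn (G : SimpleGraph V) (S : Set V) (x y : V) : Prop :=
  ∃ (hx : x ∈ S) (hy : y ∈ S), (G.induce S).Reachable ⟨x, hx⟩ ⟨y, hy⟩

namespace ReachableIn

variable {G : SimpleGraph V} {S S' : Set V} {v x y z : V}

lemma right_mem (h : G.ReachableIn S x y) : y ∈ S := h.2.1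

lemma refl (hx : x ∈ S) : G.ReachableIn S x x := ⟨hx, hx, .rfl⟩

lemma of_adj (hxy : G.Adj x y) (hx : x ∈ S) (hy : y ∈ S) : G.ReachableIn S x y :=
  ⟨hx, hy, (show (G.induce S).Adj ⟨x, hx⟩ ⟨y, hy⟩ from hxy).reachable⟩

lemma symm (h : G.ReachableIn S x y) : G.ReachableIn S y x :=
  let ⟨hx, hy, r⟩ := h
  ⟨hy, hx, r.symm⟩

lemma trans (h₁ : G.ReachableIn S x y) (h₂ : G.ReachableIn S y z) : G.ReachableIn S x z :=
  let ⟨hx, _, r₁⟩ := h₁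
  let ⟨_, hz, r₂⟩ := h₂
  ⟨hx, hz, r₁.trans r₂⟩

lemma mono (hS : S ⊆ S') (h : G.ReachableIn S x y) : G.ReachableIn S' x y :=
  let ⟨hx, hy, r⟩ := h
  ⟨hS hx, hS hy, r.map (G.induceHomOfLE hS).toHom⟩

/-- Stop a walk from `x` to `y` just before its first visit to `v`, if there is one. -/
lemma sdiff_singleton_or_exists_adj (h : G.ReachableIn S x y) (hxv : x ≠ v) :
    G.ReachableIn (S \ {v}) x y ∨ ∃ u, G.Adj v u ∧ G.ReachableIn (S \ {v}) x u := by
  obtain ⟨hx, hy, ⟨w⟩⟩ := h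
  suffices ∀ {a b : S} (w : (G.induce S).Walk a b), (a : V) ≠ v →
      G.ReachableIn (S \ {v}) a b ∨ ∃ u, G.Adj v u ∧ G.ReachableIn (S \ {v}) a u from
    this w hxv
  intro a b w
  induction w with
  | @nil a => exact fun hav => .inl (refl ⟨a.2, hav⟩)
  | @cons a b c hab p ih =>
    intro hav
    have ha : (a : V) ∈ S \ {v} := ⟨a.2, hav⟩
    by_cases hbv : (b : V) = v
    · exact .inr ⟨a, hbv ▸ hab.symm, refl ha⟩
    · have hstep : G.ReachableIn (S \ {v}) a b := of_adj hab ha ⟨b.2, hbv⟩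
      exact (ih hbv).imp hstep.trans fun ⟨u, hvu, hbu⟩ => ⟨u, hvu, hstep.trans hbu⟩

end ReachableIn

end SimpleGraph

lemma sepSets_iff_not_reachableIn {G : SimpleGraph V} {M : Set V} {s t : V} :
    SepSets G M s t ↔ ¬ G.ReachableIn Mᶜ s t := by
  simp only [SepSets, ReachableIn, not_exists]

lemma IsCompOf.mem_iff_reachableIn {G : SimpleGraph V} {M C : Set V} {t x : V}
    (hC : IsCompOf G M C) (ht : t ∈ C) : x ∈ C ↔ G.ReachableIn Mᶜ x t := by
  obtain ⟨c, rfl⟩ := hC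
  obtain ⟨t', ht', rfl⟩ := ht
  obtain rfl := (ConnectedComponent.mem_supp_iff _ _).mp ht'
  constructor
  · rintro ⟨x', hx', rfl⟩
    exact ⟨x'.2, t'.2, ConnectedComponent.exact hx'⟩
  · rintro ⟨hx, _, hr⟩
    exact ⟨⟨x, hx⟩, ConnectedComponent.sound hr, rfl⟩

/-- The set `M^{i,v}`. -/
def shiftedSet (G : SimpleGraph V) (M : Set V) {ι : Type*} (C : ι → Set V) (i : ι) (v : V) :
    Set V :=
  (M \ {v}) ∪ {u | ∃ j, j ≠ i ∧ u ∈ C j ∧ G.Adj v u}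

section shiftedSet

variable {ι : Type*} {G : SimpleGraph V} {t : ι → V} {M : Set V} {C : ι → Set V} {i a b : ι}
  {u v : V}

lemma compl_shiftedSet_sdiff_subset : (shiftedSet G M C i v)ᶜ \ {v} ⊆ Mᶜ :=
  fun _ ⟨hx, hxv⟩ hxM => hx (.inl ⟨hxM, hxv⟩)

lemma shiftedSet_subset_compl_range (hM : IsNodeMultiwayCut G (range t) M)
    (ht : Function.Injective t) (hC : ∀ j, IsCompOf G M (C j) ∧ t j ∈ C j)
    (hNv : ∀ u : V, G.Adj v u → u ∈ range t → u = t i) :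
    shiftedSet G M C i v ⊆ (range t)ᶜ := by
  rintro x (⟨hxM, -⟩ | ⟨j, hji, hxC, hvx⟩) hxT
  · exact hM.1 hxM hxT
  · obtain rfl := hNv x hvx hxT
    have hsep := hM.2 _ ⟨i, rfl⟩ _ ⟨j, rfl⟩ (ht.ne hji.symm)
    exact sepSets_iff_not_reachableIn.mp hsep (((hC j).1.mem_iff_reachableIn (hC j).2).mp hxC)

lemma eq_of_reachableIn_compl_shiftedSet_sdiff (hC : ∀ j, IsCompOf G M (C j) ∧ t j ∈ C j)
    (h : G.ReachableIn ((shiftedSet G M C i v)ᶜ \ {v}) (t a) u) (hvu : G.Adj v u) : a = i := by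
  by_contra hai
  have huC : u ∈ C a :=
    ((hC a).1.mem_iff_reachableIn (hC a).2).mpr (h.mono compl_shiftedSet_sdiff_subset).symm
  exact h.right_mem.1 (.inr ⟨a, hai, huC, hvu⟩)

lemma eq_of_reachableIn_compl_shiftedSet (hM : IsNodeMultiwayCut G (range t) M)
    (hC : ∀ j, IsCompOf G M (C j) ∧ t j ∈ C j) (hv : v ∈ M) (hab : t a ≠ t b)
    (h : G.ReachableIn (shiftedSet G M C i v)ᶜ (t a) (t b)) : a = i := by
  have hav : t a ≠ v := fun hav => hM.1 (hav ▸ hv) ⟨a, rfl⟩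
  rcases h.sdiff_singleton_or_exists_adj hav with hab' | ⟨u, hvu, hau⟩
  · have hsep := hM.2 _ ⟨a, rfl⟩ _ ⟨b, rfl⟩ hab
    exact absurd (hab'.mono compl_shiftedSet_sdiff_subset) (sepSets_iff_not_reachableIn.mp hsep)
  · exact eq_of_reachableIn_compl_shiftedSet_sdiff hC hau hvu

lemma sepSets_shiftedSet (hM : IsNodeMultiwayCut G (range t) M)
    (hC : ∀ j, IsCompOf G M (C j) ∧ t j ∈ C j) (hv : v ∈ M) (hab : t a ≠ t b) :
    SepSets G (shiftedSet G M C i v) (t a) (t b) := by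
  rw [sepSets_iff_not_reachableIn]
  intro h
  apply hab
  rw [eq_of_reachableIn_compl_shiftedSet hM hC hv hab h,
    eq_of_reachableIn_compl_shiftedSet hM hC hv hab.symm h.symm]

end shiftedSet

/-- Let `M` be a minimal node multiway cut of `(G, T)` with components
`C₁, …, C_k` (`t_i ∈ C_i`), and let `v ∈ M` with `N(v) ∩ (T \ {t_i}) = ∅`. Then
`M^{i,v} = (M \ {v}) ∪ (⋃_{j ≠ i} N(v) ∩ C_j)` is a node multiway cut of `(G, T)`. -/
theorem shifted_set_is_multiway_cut (G : SimpleGraph V) (k : ℕ) (t : Fin k → V)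
    (ht : Function.Injective t) (M : Set V)
    (hM : IsMinNodeMultiwayCut G (Set.range t) M)
    (C : Fin k → Set V) (hC : ∀ i, IsCompOf G M (C i) ∧ t i ∈ C i)
    (i : Fin k) (v : V) (hv : v ∈ M)
    (hNv : ∀ u : V, G.Adj v u → u ∈ Set.range t → u = t i) :
    IsNodeMultiwayCut G (Set.range t)
      ((M \ {v}) ∪ {u | ∃ j : Fin k, j ≠ i ∧ u ∈ C j ∧ G.Adj v u}) := by
  refine ⟨shiftedSet_subset_compl_range hM.1 ht hC hNv, ?_⟩
  rintro _ ⟨a, rfl⟩ _ ⟨b, rfl⟩ hab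
  exact sepSets_shiftedSet hM.1 hC hv hab
end

section
/- Let M be a minimal edge multiway cut of (G,T) with partition P_M = {C₁,…,C_k} (t_i ∈ C_i), and let P_R = {C^r_1,…,C^r_k} be the root partition. Then C_i ⊆ C^r_1 ∪ ⋯ ∪ C^r_i for every 1 ≤ i ≤ k. -/
open SimpleGraph Set

variable {V : Type*}

/-- `M` is an edge multiway cut of `(G, T)`: a set of edges of `G` whose removal
disconnects every pair of distinct terminals. -/
def IsEdgeMultiwayCut (G : SimpleGraph V) (T : Set V) (M : Set (Sym2 V)) : Prop :=
  M ⊆ G.edgeSet ∧ ∀ s ∈ T, ∀ u ∈ T, s ≠ u → ¬ (G.deleteEdges M).Reachable s u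

/-- `M` is a minimal edge multiway cut of `(G, T)`. -/
def IsMinEdgeMultiwayCut (G : SimpleGraph V) (T : Set V) (M : Set (Sym2 V)) : Prop :=
  IsEdgeMultiwayCut G T M ∧ ∀ M' ⊂ M, ¬ IsEdgeMultiwayCut G T M'

/-- `C` is (the vertex set of) a connected component of the graph `H`. -/
def IsComp (H : SimpleGraph V) (C : Set V) : Prop :=
  ∃ c : H.ConnectedComponent, C = c.supp

/-- `Cr` is the root family: `Cr i` is the connected component containing `t i` of
`G − (Cr 0 ∪ ⋯ ∪ Cr (i-1) ∪ {t (i+1), …, t (k-1)})`. -/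
def IsRootFamily {k : ℕ} (G : SimpleGraph V) (t : Fin k → V) (Cr : Fin k → Set V) : Prop :=
  ∀ i, IsCompOf G ((⋃ j < i, Cr j) ∪ (t '' {j | i < j})) (Cr i) ∧ t i ∈ Cr i

/-- The set of edges of `G` crossing between distinct blocks of the family `C`. -/
def crossEdges {k : ℕ} (G : SimpleGraph V) (C : Fin k → Set V) : Set (Sym2 V) :=
  {e | ∃ a b : V, G.Adj a b ∧ e = s(a, b) ∧ ∀ i, ¬ (a ∈ C i ∧ b ∈ C i)}

/-- A component of `G − R` (vertex deletion) is closed under `G`-adjacency into `Rᶜ`. -/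
lemma IsCompOf.adj_mem {G : SimpleGraph V} {R C : Set V} (hC : IsCompOf G R C)
    {x y : V} (hx : x ∈ C) (hadj : G.Adj y x) (hy : y ∉ R) : y ∈ C := by
  obtain ⟨c, rfl⟩ := hC
  obtain ⟨⟨x, hxR⟩, hxc, rfl⟩ := hx
  refine ⟨⟨y, hy⟩, ?_, rfl⟩
  rw [ConnectedComponent.mem_supp_iff] at hxc ⊢
  rw [← hxc]
  have : (G.induce (Rᶜ : Set V)).Adj ⟨y, hy⟩ ⟨x, hxR⟩ := by
    simpa using hadj
  exact ConnectedComponent.sound this.reachable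

/-- The root blocks are pairwise disjoint. -/
lemma rootFamily_disjoint {k : ℕ} {G : SimpleGraph V} {t : Fin k → V} {Cr : Fin k → Set V}
    (hCr : IsRootFamily G t Cr) {p q : Fin k} (hpq : p ≠ q) {x : V}
    (hp : x ∈ Cr p) (hq : x ∈ Cr q) : False := by
  wlog h : p < q generalizing p q
  · exact this hpq.symm hq hp (hpq.lt_or_gt.resolve_left h)
  obtain ⟨c, hc⟩ := (hCr q).1
  rw [hc] at hq
  obtain ⟨⟨x', hx'⟩, -, rfl⟩ := hq
  exact hx' (Or.inl (mem_biUnion h hp))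

/-- Any `G`-edge between `Cr p` and `Cr q` with `p < q` has its `Cr q`-endpoint
equal to `t q`. -/
lemma rootFamily_cross {k : ℕ} {G : SimpleGraph V} {t : Fin k → V} {Cr : Fin k → Set V}
    (hCr : IsRootFamily G t Cr) {p q : Fin k} (hpq : p < q) {x y : V}
    (hx : x ∈ Cr p) (hy : y ∈ Cr q) (hadj : G.Adj x y) : y = t q := by
  have hyR : y ∈ (⋃ j < p, Cr j) ∪ (t '' {j | p < j}) := by
    by_contra hR
    exact rootFamily_disjoint hCr hpq.ne ((hCr p).1.adj_mem hx hadj.symm hR) hy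
  rcases hyR with hmem | ⟨s, hs, rfl⟩
  · obtain ⟨l, hl, hyl⟩ := by simpa using hmem
    exact (rootFamily_disjoint hCr (hl.trans hpq).ne hyl hy).elim
  · rcases eq_or_ne s q with rfl | hsq
    · rfl
    · exact (rootFamily_disjoint hCr hsq ((hCr s).2) hy).elim

/-- The root blocks cover `V` (when there is at least one terminal). -/
lemma rootFamily_cover {k : ℕ} {G : SimpleGraph V} (hconn : G.Connected)
    {t : Fin k → V} {Cr : Fin k → Set V} (hCr : IsRootFamily G t Cr) (i0 : Fin k) (v : V) :
    ∃ j, v ∈ Cr j := by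
  obtain ⟨W⟩ := hconn.preconnected v (t i0)
  suffices h : ∀ (u w : V), G.Walk u w → (∃ j, w ∈ Cr j) → ∃ j, u ∈ Cr j from
    h v (t i0) W ⟨i0, (hCr i0).2⟩
  intro u w W
  induction W with
  | nil => exact id
  | cons h W ih =>
    rename_i a b c
    intro hw
    obtain ⟨j, hj⟩ := ih hw
    by_cases hR : a ∈ (⋃ l < j, Cr l) ∪ (t '' {s | j < s})
    · rcases hR with hmem | ⟨s, -, rfl⟩
      · obtain ⟨l, -, hl⟩ := by simpa using hmem
        exact ⟨l, hl⟩
      · exact ⟨s, (hCr s).2⟩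
    · exact ⟨j, (hCr j).1.adj_mem hj h hR⟩

/-- Let `M` be a minimal edge multiway cut of `(G, T)` with components
`C₁, …, C_k` (`t_i ∈ C_i`) and let `Cr` be the root family. Then
`C_i ⊆ Cr 1 ∪ ⋯ ∪ Cr i` for every `i`. -/
theorem component_subset_root_prefix (G : SimpleGraph V) (hconn : G.Connected)
    (k : ℕ) (t : Fin k → V) (ht : Function.Injective t)
    (Cr : Fin k → Set V) (hCr : IsRootFamily G t Cr)
    (M : Set (Sym2 V)) (hM : IsMinEdgeMultiwayCut G (Set.range t) M)
    (C : Fin k → Set V) (hC : ∀ i, IsComp (G.deleteEdges M) (C i) ∧ t i ∈ C i) :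
    ∀ i : Fin k, C i ⊆ ⋃ j ≤ i, Cr j := by
  intro i v hv
  obtain ⟨⟨c, hc⟩, hti⟩ := hC i
  rw [hc, ConnectedComponent.mem_supp_iff] at hv hti
  have hreach : (G.deleteEdges M).Reachable v (t i) :=
    ConnectedComponent.exact (hv.trans hti.symm)
  obtain ⟨W⟩ := hreach
  clear hv hti hc
  suffices h : ∀ (u w : V), (G.deleteEdges M).Walk u w → w = t i → u ∈ ⋃ j ≤ i, Cr j from
    h v (t i) W rfl
  intro u w W
  induction W with
  | nil =>
    rintro rfl
    exact mem_iUnion₂.mpr ⟨i, le_rfl, (hCr i).2⟩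
  | cons h W ih =>
    rename_i a b w'
    intro hw
    obtain ⟨q, hqi, hq⟩ := by simpa using ih hw
    obtain ⟨p, hp⟩ := rootFamily_cover hconn hCr i a
    by_cases hpi : p ≤ i
    · exact mem_iUnion₂.mpr ⟨p, hpi, hp⟩
    push_neg at hpi
    -- then q ≤ i < p, so the edge a–b ascends from Cr q to Cr p, forcing a = t p
    have hadj : G.Adj a b := by
      have := (SimpleGraph.deleteEdges_adj (s := M)).mp h
      exact this.1
    have ha : a = t p := rootFamily_cross hCr (lt_of_le_of_lt hqi hpi) hq hp hadj.symm
    exfalso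
    have hne : t p ≠ t i := fun hEq => absurd (ht hEq) hpi.ne'
    exact hM.1.2 (t p) ⟨p, rfl⟩ (t i) ⟨i, rfl⟩ hne ⟨ha ▸ (Walk.cons h W).copy rfl hw⟩
end

section
/- Let M be a minimal edge multiway cut of (G,T) with M ≠ R, where R is the root minimal edge multiway cut. Then there exists a shiftable vertex, i.e., a non-terminal vertex v lying in block C_j of P_M for some j, adjacent to a vertex of block C_i for some i < j. -/
open SimpleGraph Set

variable {V : Type*}

/-- A set closed under adjacency absorbs walks. -/
lemma walk_closed {G : SimpleGraph V} {D : Set V}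
    (hD : ∀ ⦃x y : V⦄, G.Adj x y → x ∈ D → y ∈ D) :
    ∀ {x y : V}, G.Walk x y → x ∈ D → y ∈ D := by
  intro x y w
  induction w with
  | nil => exact id
  | cons h _ ih => exact fun hx => ih (hD h hx)

/-- A walk from inside `D` to outside `D` crosses the boundary. -/
lemma exists_boundary {G : SimpleGraph V} {D : Set V} :
    ∀ {x y : V}, G.Walk x y → x ∈ D → y ∉ D →
      ∃ a b, G.Adj a b ∧ a ∈ D ∧ b ∉ D := by
  intro x y w
  induction w with
  | nil => exact fun hx hy => absurd hx hy
  | @cons u z _ h p ih =>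
    intro hx hy
    by_cases hz : z ∈ D
    · exact ih hz hy
    · exact ⟨u, z, h, hx, hz⟩

/-- Let `M ≠ R` be a minimal edge multiway cut of `(G, T)` with
partition `C₁, …, C_k`, where `R` is the root minimal edge multiway cut. Then there is a
shiftable vertex: a non-terminal vertex `v` lying in a block `C j` and adjacent to a
vertex of a block `C i` with `i < j`. -/
theorem exists_shiftable_vertex (G : SimpleGraph V) (hconn : G.Connected)
    (k : ℕ) (hk : 2 ≤ k) (t : Fin k → V) (ht : Function.Injective t)
    (Cr : Fin k → Set V) (hCr : IsRootFamily G t Cr)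
    (M : Set (Sym2 V)) (hM : IsMinEdgeMultiwayCut G (Set.range t) M)
    (C : Fin k → Set V) (hC : ∀ i, IsComp (G.deleteEdges M) (C i) ∧ t i ∈ C i)
    (hne : M ≠ crossEdges G Cr) :
    ∃ (i j : Fin k) (v : V), i < j ∧ v ∉ Set.range t ∧ v ∈ C j ∧
      ∃ u ∈ C i, G.Adj v u := by
  classical
  by_contra hcon
  push_neg at hcon
  apply hne
  -- membership characterization of the blocks
  have hCmem : ∀ (i : Fin k) (x : V), x ∈ C i ↔ (G.deleteEdges M).Reachable x (t i) := by
    intro i x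
    obtain ⟨⟨c, hc⟩, hti⟩ := hC i
    rw [hc] at hti ⊢
    rw [ConnectedComponent.mem_supp_iff] at hti ⊢
    rw [← hti]
    exact ConnectedComponent.eq
  have hdisj : ∀ {i j : Fin k} {x : V}, x ∈ C i → x ∈ C j → i = j := by
    intro i j x hxi hxj
    by_contra hij
    exact hM.1.2 (t i) ⟨i, rfl⟩ (t j) ⟨j, rfl⟩ (fun h => hij (ht h))
      (((hCmem i x).mp hxi).symm.trans ((hCmem j x).mp hxj))
  -- the blocks cover V
  have hcover : ∀ v : V, ∃ i, v ∈ C i := by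
    intro v
    by_contra hv
    push_neg at hv
    set X : Set V := {x | (G.deleteEdges M).Reachable x v} with hX
    have hXC : ∀ (m : Fin k) (z : V), z ∈ X → z ∉ C m := by
      intro m z hz hzC
      exact hv m ((hCmem m v).mpr (hz.symm.trans ((hCmem m z).mp hzC)))
    obtain ⟨w⟩ := hconn.preconnected v (t ⟨0, by omega⟩)
    have hvX : v ∈ X := Reachable.refl v
    have ht0X : t ⟨0, by omega⟩ ∉ X := fun h => hXC _ _ h ((hC _).2)
    obtain ⟨a, b, hab, haX, hbX⟩ := exists_boundary w hvX ht0X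
    have habM : s(a, b) ∈ M := by
      by_contra h
      exact hbX ((SimpleGraph.deleteEdges_adj.mpr ⟨hab, h⟩).symm.reachable.trans haX)
    have hcut : IsEdgeMultiwayCut G (Set.range t) (M \ {s(a, b)}) := by
      refine ⟨diff_subset.trans hM.1.1, ?_⟩
      rintro s ⟨i, rfl⟩ u ⟨j, rfl⟩ hsu ⟨w'⟩
      have hij : i ≠ j := fun h => hsu (congrArg t h)
      by_cases hbC : b ∈ C i
      · have hclosed : ∀ ⦃x y : V⦄, (G.deleteEdges (M \ {s(a, b)})).Adj x y →
            x ∈ C i ∪ X → y ∈ C i ∪ X := by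
          intro x y hxy hx
          rw [SimpleGraph.deleteEdges_adj] at hxy
          obtain ⟨hG, hnm⟩ := hxy
          by_cases hm : s(x, y) ∈ M
          · have heq : s(x, y) = s(a, b) := by
              by_contra hne'
              exact hnm ⟨hm, hne'⟩
            rw [Sym2.eq_iff] at heq
            rcases heq with ⟨rfl, rfl⟩ | ⟨rfl, rfl⟩
            · exact Or.inl hbC
            · exact Or.inr haX
          · have hH : (G.deleteEdges M).Adj x y := SimpleGraph.deleteEdges_adj.mpr ⟨hG, hm⟩
            rcases hx with hx | hx
            · exact Or.inl ((hCmem i y).mpr (hH.symm.reachable.trans ((hCmem i x).mp hx)))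
            · exact Or.inr (hH.symm.reachable.trans hx)
        rcases walk_closed hclosed w' (Or.inl ((hC i).2)) with h | h
        · exact hij (hdisj (hC j).2 h).symm
        · exact hXC j _ h ((hC j).2)
      · have hclosed : ∀ ⦃x y : V⦄, (G.deleteEdges (M \ {s(a, b)})).Adj x y →
            x ∈ C i → y ∈ C i := by
          intro x y hxy hx
          rw [SimpleGraph.deleteEdges_adj] at hxy
          obtain ⟨hG, hnm⟩ := hxy
          by_cases hm : s(x, y) ∈ M
          · have heq : s(x, y) = s(a, b) := by
              by_contra hne'
              exact hnm ⟨hm, hne'⟩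
            rw [Sym2.eq_iff] at heq
            rcases heq with ⟨rfl, rfl⟩ | ⟨rfl, rfl⟩
            · exact absurd hx (hXC i _ haX)
            · exact absurd hx hbC
          · exact (hCmem i y).mpr
              ((SimpleGraph.deleteEdges_adj.mpr ⟨hG, hm⟩).symm.reachable.trans ((hCmem i x).mp hx))
        exact hij (hdisj (hC j).2 (walk_closed hclosed w' ((hC i).2))).symm
    exact hM.2 _ (Set.sdiff_singleton_ssubset.mpr habM) hcut
  -- M equals the cross edges of its own partition
  have hMcross : M ⊆ crossEdges G C := by
    intro e he
    revert he
    induction e using Sym2.ind with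
    | _ a b =>
      intro he
      have hab : G.Adj a b := G.mem_edgeSet.mp (hM.1.1 he)
      refine ⟨a, b, hab, rfl, ?_⟩
      rintro i0 ⟨haC, hbC⟩
      have hcut : IsEdgeMultiwayCut G (Set.range t) (M \ {s(a, b)}) := by
        refine ⟨diff_subset.trans hM.1.1, ?_⟩
        rintro s ⟨i, rfl⟩ u ⟨j, rfl⟩ hsu ⟨w'⟩
        have hij : i ≠ j := fun h => hsu (congrArg t h)
        have hclosed : ∀ ⦃x y : V⦄, (G.deleteEdges (M \ {s(a, b)})).Adj x y →
            x ∈ C i → y ∈ C i := by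
          intro x y hxy hx
          rw [SimpleGraph.deleteEdges_adj] at hxy
          obtain ⟨hG, hnm⟩ := hxy
          by_cases hm : s(x, y) ∈ M
          · have heq : s(x, y) = s(a, b) := by
              by_contra hne'
              exact hnm ⟨hm, hne'⟩
            rw [Sym2.eq_iff] at heq
            rcases heq with ⟨rfl, rfl⟩ | ⟨rfl, rfl⟩
            · rcases hdisj hx haC with rfl; exact hbC
            · rcases hdisj hx hbC with rfl; exact haC
          · exact (hCmem i y).mpr
              ((SimpleGraph.deleteEdges_adj.mpr ⟨hG, hm⟩).symm.reachable.trans ((hCmem i x).mp hx))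
        exact hij (hdisj (hC j).2 (walk_closed hclosed w' ((hC i).2))).symm
      exact absurd hcut (hM.2 _ (Set.sdiff_singleton_ssubset.mpr he))
  have hcrossM : crossEdges G C ⊆ M := by
    rintro e ⟨a, b, hab, rfl, hblk⟩
    by_contra he
    have hH : (G.deleteEdges M).Adj a b := SimpleGraph.deleteEdges_adj.mpr ⟨hab, he⟩
    obtain ⟨i, hai⟩ := hcover a
    exact hblk i ⟨hai, (hCmem i b).mpr (hH.symm.reachable.trans ((hCmem i a).mp hai))⟩
  -- by strong induction, C i = Cr i for all i
  have key : ∀ n : ℕ, ∀ i : Fin k, (i : ℕ) = n → C i = Cr i := by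
    intro n
    induction n using Nat.strong_induction_on with
    | _ n IH =>
      intro i hin
      subst hin
      have IH' : ∀ j : Fin k, j < i → C j = Cr j := fun j hj => IH j (by exact_mod_cast hj) j rfl
      have hCri := hCr i
      set S : Set V := (⋃ j < i, Cr j) ∪ (t '' {j | i < j}) with hSdef
      obtain ⟨⟨c, hc⟩, htc⟩ := hCri
      have hSmem : ∀ x : V, x ∈ S ↔ (∃ j, j < i ∧ x ∈ C j) ∨ (∃ j, i < j ∧ x = t j) := by
        intro x
        rw [hSdef]
        simp only [Set.mem_union, Set.mem_iUnion, Set.mem_image, Set.mem_setOf_eq]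
        constructor
        · rintro (⟨j, hj, hx⟩ | ⟨j, hj, rfl⟩)
          · exact Or.inl ⟨j, hj, by rw [IH' j hj]; exact hx⟩
          · exact Or.inr ⟨j, hj, rfl⟩
        · rintro (⟨j, hj, hx⟩ | ⟨j, hj, rfl⟩)
          · exact Or.inl ⟨j, hj, by rw [← IH' j hj]; exact hx⟩
          · exact Or.inr ⟨j, hj, rfl⟩
      have hCiS : ∀ x ∈ C i, x ∈ Sᶜ := by
        intro x hx
        rw [Set.mem_compl_iff, hSmem]
        rintro (⟨j, hj, hxj⟩ | ⟨j, hj, rfl⟩)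
        · exact (ne_of_gt hj) (hdisj hx hxj)
        · exact (ne_of_lt hj) (hdisj hx ((hC j).2))
      have hstep : ∀ x y : V, x ∈ C i → G.Adj x y → y ∈ Sᶜ → y ∈ C i := by
        intro x y hx hxy hyS
        obtain ⟨m, hym⟩ := hcover y
        rcases lt_trichotomy m i with hmi | rfl | him
        · exact absurd ((hSmem y).mpr (Or.inl ⟨m, hmi, hym⟩)) hyS
        · exact hym
        · have hynt : y ∉ Set.range t := by
            rintro ⟨p, rfl⟩
            have hpm : p = m := hdisj ((hC p).2) hym
            subst hpm
            exact hyS ((hSmem _).mpr (Or.inr ⟨p, him, rfl⟩))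
          exact absurd hxy.symm (hcon i m y him hynt hym x hx)
      have hCrC : Cr i ⊆ C i := by
        intro v hv
        rw [hc] at hv htc
        obtain ⟨v', hv', rfl⟩ := hv
        obtain ⟨t', ht', htv⟩ := htc
        have hreach : (G.induce (Sᶜ : Set V)).Reachable t' v' := by
          rw [ConnectedComponent.mem_supp_iff] at hv' ht'
          exact ConnectedComponent.eq.mp (ht'.trans hv'.symm)
        obtain ⟨w'⟩ := hreach
        have hclosed : ∀ ⦃x y : ↥(Sᶜ : Set V)⦄, (G.induce (Sᶜ : Set V)).Adj x y →
            x ∈ {z : ↥(Sᶜ : Set V) | (z : V) ∈ C i} → y ∈ {z : ↥(Sᶜ : Set V) | (z : V) ∈ C i} := by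
          intro x y hxy hx
          exact hstep x y hx hxy y.2
        have hst : t' ∈ {z : ↥(Sᶜ : Set V) | (z : V) ∈ C i} := by
          show (t' : V) ∈ C i
          rw [htv]; exact (hC i).2
        exact walk_closed hclosed w' hst
      have hCCr : C i ⊆ Cr i := by
        intro x hx
        obtain ⟨w0⟩ := ((hCmem i x).mp hx).symm
        have lift : ∀ {p q : V}, (G.deleteEdges M).Walk p q → ∀ hp : p ∈ C i,
            ∃ hq : q ∈ C i,
              (G.induce (Sᶜ : Set V)).Reachable ⟨p, hCiS p hp⟩ ⟨q, hCiS q hq⟩ := by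
          intro p q w
          induction w with
          | nil => exact fun hp => ⟨hp, Reachable.refl _⟩
          | @cons p z q h w ih =>
            intro hp
            have hz : z ∈ C i := (hCmem i z).mpr (h.symm.reachable.trans ((hCmem i p).mp hp))
            obtain ⟨hq, hr⟩ := ih hz
            refine ⟨hq, Reachable.trans ?_ hr⟩
            have hGpz : G.Adj p z := (SimpleGraph.deleteEdges_adj.mp h).1
            exact SimpleGraph.Adj.reachable (hGpz : G.Adj p z)
        obtain ⟨hx', hr⟩ := lift w0 ((hC i).2)
        rw [hc] at htc ⊢
        obtain ⟨t', ht', htv⟩ := htc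
        refine ⟨⟨x, hCiS x hx'⟩, ?_, rfl⟩
        have hts : (⟨t i, hCiS _ ((hC i).2)⟩ : ↥(Sᶜ : Set V)) = t' := Subtype.ext htv.symm
        rw [ConnectedComponent.mem_supp_iff, ← (ConnectedComponent.mem_supp_iff c t').mp ht',
          ← hts]
        exact ConnectedComponent.eq.mpr hr.symm
      exact Set.Subset.antisymm hCCr hCrC
  have hCeq : C = Cr := funext fun i => key i i rfl
  rw [← hCeq]
  exact Set.Subset.antisymm hMcross hcrossM
end

section
/- Let M be a minimal edge multiway cut of (G,T) with M ≠ R, let p be the pivot of M (a designated vertex shiftable into C_{li(M)}, where li(M) is the largest index of a block admitting a shiftable vertex), and let Par(M) be the partition obtained by moving C_{P_M(p)} \ C into C_{li(M)}, where C is the component of G[C_{P_M(p)} \ {p}] containing t_{P_M(p)}. Then Par(M) is a minimal edge multiway cut of (G,T) and depth(Par(M)) < depth(M). -/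
/-!
Let `g` be the index function `P_M` with `C s \ C₀` reassigned to `li`. The blocks of `Par(M)`
are the fibres of `g`, so they partition `V` and contain their terminals, and each of them induces
a connected subgraph. The only new case is `C li ∪ (C s \ C₀)`: every vertex of
`C s \ C₀` reaches `p` inside `C s \ C₀`, because a walk to `p` inside `C s` can only leave its
own component of `G[C s \ {p}]` (which is not `C₀`) by stepping onto `p`; and `p` has a neighbour
in `C li`. For a partition into connected blocks, each holding its own terminal, the crossing
edges form a minimal multiway cut: dropping a crossing edge reconnects the terminals of its two
blocks.

For the depth, `g ≤ P_M` pointwise and `g p = li < s = P_M p`. Truncated subtraction is harmless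
at `p` because `P_R p ≤ li`: along a walk inside a connected block containing `t_i` and no other
terminal, the root index can never climb above `i`, since the root block of a vertex is a component
of the graph with only earlier root blocks and later terminals removed.
-/

open SimpleGraph Set

variable {V : Type*}

namespace SimpleGraph

variable {W : Type*} {G : SimpleGraph V} {H : SimpleGraph W}

lemma ConnectedComponent.preconnected_induce_image (f : H →g G) (c : H.ConnectedComponent) :
    (G.induce (f '' c.supp)).Preconnected :=
  c.connected_toSimpleGraph.preconnected.map
    (⟨fun x => ⟨f x, mem_image_of_mem f x.2⟩, f.map_rel⟩ :
      c.toSimpleGraph →g G.induce (f '' c.supp))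
    (by rintro ⟨_, x, hx, rfl⟩; exact ⟨⟨x, hx⟩, rfl⟩)

end SimpleGraph

section Components

variable {G H : SimpleGraph V} {X C D : Set V} {u v : V}

lemma IsComp.reachable (hC : IsComp H C) (hu : u ∈ C) (hv : v ∈ C) : H.Reachable u v := by
  obtain ⟨c, rfl⟩ := hC
  exact c.reachable_of_mem_supp hu hv

lemma IsComp.preconnected_induce (hC : IsComp H C) (hle : H ≤ G) : (G.induce C).Preconnected := by
  obtain ⟨c, rfl⟩ := hC
  have h := c.preconnected_induce_image (Hom.ofLE hle)
  rwa [Hom.coe_ofLE, Set.image_id] at h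

lemma IsCompOf.preconnected (hC : IsCompOf G X C) : (G.induce C).Preconnected := by
  obtain ⟨c, rfl⟩ := hC
  exact c.preconnected_induce_image (Embedding.induce _).toHom

lemma IsCompOf.subset_compl (hC : IsCompOf G X C) : C ⊆ Xᶜ := by
  obtain ⟨c, rfl⟩ := hC
  rintro _ ⟨x, -, rfl⟩
  exact x.2

lemma IsCompOf.subset_of_compl (hC : IsCompOf G Xᶜ C) : C ⊆ X :=
  compl_compl X ▸ hC.subset_compl

lemma IsCompOf.mem_of_adj_s18 (hC : IsCompOf G X C) (hu : u ∈ C) (hv : v ∉ X) (huv : G.Adj u v) :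
    v ∈ C := by
  obtain ⟨c, rfl⟩ := hC
  obtain ⟨x, hx, rfl⟩ := hu
  refine ⟨⟨v, hv⟩, ?_, rfl⟩
  rw [ConnectedComponent.mem_supp_iff] at hx ⊢
  rw [← hx]
  exact ConnectedComponent.sound (show (G.induce Xᶜ).Adj x ⟨v, hv⟩ from huv).reachable.symm

lemma exists_isCompOf_mem (hv : v ∉ X) : ∃ A, IsCompOf G X A ∧ v ∈ A :=
  ⟨_, ⟨(G.induce Xᶜ).connectedComponentMk ⟨v, hv⟩, rfl⟩, ⟨v, hv⟩, rfl, rfl⟩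

lemma IsCompOf.eq_of_mem (hC : IsCompOf G X C) (hD : IsCompOf G X D) (hvC : v ∈ C) (hvD : v ∈ D) :
    C = D := by
  obtain ⟨c, rfl⟩ := hC
  obtain ⟨d, rfl⟩ := hD
  obtain ⟨x, hx, rfl⟩ := hvC
  obtain ⟨y, hy, hxy⟩ := hvD
  obtain rfl : y = x := Subtype.ext hxy
  rw [ConnectedComponent.mem_supp_iff] at hx hy
  rw [← hx, ← hy]

lemma IsCompOf.preconnected_induce_diff {S : Set V} {p : V} (hS : (G.induce S).Preconnected)
    (hp : p ∈ S) (hD : IsCompOf G (S \ {p})ᶜ D) : (G.induce (S \ D)).Preconnected := by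
  have hDS : D ⊆ S \ {p} := hD.subset_of_compl
  have hpD : p ∈ S \ D := ⟨hp, fun h => (hDS h).2 rfl⟩
  suffices key : ∀ x (hx : x ∈ S \ D), (G.induce (S \ D)).Reachable ⟨x, hx⟩ ⟨p, hpD⟩ from
    fun x y => (key x x.2).trans (key y y.2).symm
  intro x hx
  by_cases hxp : x = p
  · subst hxp; rfl
  obtain ⟨A, hA, hxA⟩ :=
    exists_isCompOf_mem (G := G) (X := (S \ {p})ᶜ) (not_not.mpr ⟨hx.1, hxp⟩)
  have hAS : A ⊆ S \ {p} := hA.subset_of_compl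
  have hAD : A ⊆ S \ D := fun y hyA => ⟨(hAS hyA).1, fun hyD => hx.2 (hA.eq_of_mem hD hyA hyD ▸ hxA)⟩
  -- the walk from `x` to `p` in `G[S]` leaves `A`, and it can only do so by stepping onto `p`
  obtain ⟨w⟩ := hS ⟨x, hx.1⟩ ⟨p, hp⟩
  obtain ⟨d, -, hd₁, hd₂⟩ := w.exists_boundary_dart {y | y.1 ∈ A} hxA (fun h => (hAS h).2 rfl)
  have hdp : d.snd.1 = p := by
    by_contra hne
    exact hd₂ (hA.mem_of_adj_s18 hd₁ (not_not.mpr ⟨d.snd.2, hne⟩) d.adj)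
  have hAp : (G.induce (A ∪ {p})).Connected :=
    connected_induce_union hA.preconnected Preconnected.of_subsingleton hd₁ (mem_singleton p)
      (hdp ▸ d.adj)
  exact (hAp.preconnected ⟨x, Or.inl hxA⟩ ⟨p, Or.inr rfl⟩).map
    (induceHomOfLE G (union_subset hAD (singleton_subset_iff.mpr hpD))).toHom

end Components

open Function in
lemma eq_of_mem_of_pairwise_disjoint {ι : Type*} {P : ι → Set V} {a : V} {i j : ι}
    (hP : Pairwise (Disjoint on P)) (hi : a ∈ P i) (hj : a ∈ P j) : i = j :=
  hP.eq (not_disjoint_iff.mpr ⟨a, hi, hj⟩)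

section CrossEdges

open Function
variable {k : ℕ} {G : SimpleGraph V} {P : Fin k → Set V} {a b : V} {i j : Fin k}

lemma crossEdges_subset_edgeSet : crossEdges G P ⊆ G.edgeSet := by
  rintro _ ⟨a, b, hab, rfl, -⟩
  exact hab

lemma adj_deleteEdges_crossEdges (hab : G.Adj a b) (ha : a ∈ P i) (hb : b ∈ P i) :
    (G.deleteEdges (crossEdges G P)).Adj a b := by
  refine deleteEdges_adj.mpr ⟨hab, ?_⟩
  rintro ⟨x, y, -, he, hxy⟩
  rcases Sym2.eq_iff.mp he with ⟨rfl, rfl⟩ | ⟨rfl, rfl⟩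
  exacts [hxy i ⟨ha, hb⟩, hxy i ⟨hb, ha⟩]

lemma reachable_deleteEdges_crossEdges (hP : (G.induce (P i)).Preconnected) (ha : a ∈ P i)
    (hb : b ∈ P i) : (G.deleteEdges (crossEdges G P)).Reachable a b :=
  (hP ⟨a, ha⟩ ⟨b, hb⟩).map ⟨Subtype.val, fun {x y} h => adj_deleteEdges_crossEdges h x.2 y.2⟩

lemma mem_of_reachable_deleteEdges_crossEdges (hP : Pairwise (Disjoint on P))
    (hab : (G.deleteEdges (crossEdges G P)).Reachable a b) (ha : a ∈ P i) : b ∈ P i := by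
  obtain ⟨w⟩ := hab
  induction w with
  | nil => exact ha
  | @cons u v _ huv _ ih =>
    refine ih ?_
    obtain ⟨hadj, hcross⟩ := deleteEdges_adj.mp huv
    by_contra hv
    exact hcross ⟨u, v, hadj, rfl, fun j hj =>
      hv (eq_of_mem_of_pairwise_disjoint hP hj.1 ha ▸ hj.2)⟩

theorem crossEdges_isMinEdgeMultiwayCut {t : Fin k → V} (hP : Pairwise (Disjoint on P))
    (hcov : ∀ v, ∃ i, v ∈ P i) (ht : ∀ i, t i ∈ P i)
    (hconn : ∀ i, (G.induce (P i)).Preconnected) :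
    IsMinEdgeMultiwayCut G (range t) (crossEdges G P) := by
  refine ⟨⟨crossEdges_subset_edgeSet, ?_⟩, ?_⟩
  · rintro _ ⟨i, rfl⟩ _ ⟨j, rfl⟩ hij hreach
    have hji := eq_of_mem_of_pairwise_disjoint hP (ht j)
      (mem_of_reachable_deleteEdges_crossEdges hP hreach (ht i))
    exact hij (congrArg t hji.symm)
  · intro N hN hcut
    obtain ⟨_, ⟨a, b, hab, rfl, hsep⟩, habN⟩ := exists_of_ssubset hN
    obtain ⟨i, hai⟩ := hcov a
    obtain ⟨j, hbj⟩ := hcov b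
    have hle : G.deleteEdges (crossEdges G P) ≤ G.deleteEdges N := deleteEdges_anti hN.subset
    refine hcut.2 (t i) ⟨i, rfl⟩ (t j) ⟨j, rfl⟩ (fun h => ?_) ?_
    · obtain rfl := eq_of_mem_of_pairwise_disjoint hP (ht i) (h ▸ ht j)
      exact hsep i ⟨hai, hbj⟩
    · exact ((reachable_deleteEdges_crossEdges (hconn i) (ht i) hai).mono hle).trans <|
        (deleteEdges_adj.mpr ⟨hab, habN⟩).reachable.trans <|
          (reachable_deleteEdges_crossEdges (hconn j) hbj (ht j)).mono hle

end CrossEdges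

namespace IsRootFamily

variable {k : ℕ} {G : SimpleGraph V} {t : Fin k → V} {Cr : Fin k → Set V} {i j : Fin k} {v : V}

lemma eq_of_mem (hCr : IsRootFamily G t Cr) (hi : v ∈ Cr i) (hj : v ∈ Cr j) : i = j := by
  have hlt : ∀ {i j}, i < j → v ∈ Cr i → v ∉ Cr j := fun hij hi hj =>
    (hCr _).1.subset_compl hj (Or.inl (mem_iUnion₂.mpr ⟨_, hij, hi⟩))
  rcases lt_trichotomy i j with h | h | h
  exacts [(hlt h hi hj).elim, h, (hlt h hj hi).elim]

lemma le_of_adj (hCr : IsRootFamily G t Cr) {x y : V} (hx : x ∈ Cr i) (hy : y ∈ Cr j)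
    (hxy : G.Adj x y) (hyt : y ∉ range t) : j ≤ i := by
  by_cases hyX : y ∈ (⋃ j' < i, Cr j') ∪ t '' {j' | i < j'}
  · rcases hyX with hy' | ⟨q, -, rfl⟩
    · obtain ⟨j', hj', hyj'⟩ := mem_iUnion₂.mp hy'
      exact (hCr.eq_of_mem hy hyj').le.trans hj'.le
    · exact (hyt ⟨q, rfl⟩).elim
  · exact (hCr.eq_of_mem hy ((hCr i).1.mem_of_adj_s18 hx hyX hxy)).le

lemma index_le_of_preconnected (hCr : IsRootFamily G t Cr) {iR : V → Fin k}
    (hiR : ∀ v, v ∈ Cr (iR v)) {S : Set V} (hS : (G.induce S).Preconnected) (hti : t i ∈ S)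
    (hterm : ∀ q, t q ∈ S → q = i) (hv : v ∈ S) : iR v ≤ i := by
  have hiR_t : ∀ q, iR (t q) = q := fun q => hCr.eq_of_mem (hiR _) (hCr q).2
  -- a first vertex of the walk from `t i` to `v` leaving `{iR ≤ i}` would contradict `le_of_adj`
  by_contra hlt
  obtain ⟨w⟩ := hS ⟨t i, hti⟩ ⟨v, hv⟩
  obtain ⟨d, -, hd₁, hd₂⟩ :=
    w.exists_boundary_dart {y | iR y.1 ≤ i} (hiR_t i).le hlt
  refine hd₂ ((hCr.le_of_adj (hiR _) (hiR _) d.adj ?_).trans hd₁)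
  rintro ⟨q, hq : t q = d.snd.1⟩
  obtain rfl := hterm q (hq ▸ d.snd.2)
  exact hd₂ (show iR d.snd.1 ≤ q by rw [← hq, hiR_t])

end IsRootFamily

lemma IsEdgeMultiwayCut.eq_of_mem_isComp {k : ℕ} {G : SimpleGraph V} {M : Set (Sym2 V)}
    {t : Fin k → V} (hM : IsEdgeMultiwayCut G (range t) M) (ht : Function.Injective t)
    {C : Fin k → Set V} (hC : ∀ i, IsComp (G.deleteEdges M) (C i) ∧ t i ∈ C i) {v : V}
    {i j : Fin k} (hi : v ∈ C i) (hj : v ∈ C j) : i = j := by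
  by_contra hij
  exact hM.2 _ ⟨i, rfl⟩ _ ⟨j, rfl⟩ (ht.ne hij)
    (((hC i).1.reachable (hC i).2 hi).trans ((hC j).1.reachable hj (hC j).2))

lemma eq_preimage_of_forall_mem {ι : Type*} {P : ι → Set V} {f : V → ι}
    (huniq : ∀ {v i j}, v ∈ P i → v ∈ P j → i = j) (hf : ∀ v, v ∈ P (f v)) (i : ι) :
    P i = f ⁻¹' {i} := by
  ext v
  exact ⟨fun h => huniq (hf v) h, fun h => h ▸ hf v⟩

section ShiftBlock

open Function

variable {ι : Type*} [DecidableEq ι] {C : ι → Set V} {l s i : ι} {A : Set V}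

/-- With `A = C₀` this is the parent partition `Par(M)`: the part `C s \ A` of block `s` moves
into block `l`. -/
def shiftBlock (C : ι → Set V) (l s : ι) (A : Set V) : ι → Set V :=
  fun i => if i = l then C l ∪ (C s \ A) else if i = s then A else C i

lemma shiftBlock_left : shiftBlock C l s A l = C l ∪ (C s \ A) := if_pos rfl

lemma shiftBlock_right (hls : l ≠ s) : shiftBlock C l s A s = A := by
  rw [shiftBlock, if_neg hls.symm, if_pos rfl]

lemma shiftBlock_of_ne (hl : i ≠ l) (hs : i ≠ s) : shiftBlock C l s A i = C i := by
  rw [shiftBlock, if_neg hl, if_neg hs]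

lemma apply_mem_shiftBlock {x : ι → V} (hx : ∀ i, x i ∈ C i) (hxs : x s ∈ A) (i : ι) :
    x i ∈ shiftBlock C l s A i := by
  unfold shiftBlock
  split_ifs with hl hs
  exacts [Or.inl (hl ▸ hx i), hs ▸ hxs, hx i]

lemma shiftBlock_eq_preimage {f : V → ι} [DecidablePred (· ∈ C s \ A)]
    (hC : ∀ i, C i = f ⁻¹' {i}) (hls : l ≠ s) (hA : A ⊆ C s) (i : ι) :
    shiftBlock C l s A i = (fun v => if v ∈ C s \ A then l else f v) ⁻¹' {i} := by
  ext v
  have hvA := @hA v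
  simp only [shiftBlock, hC, mem_preimage, mem_singleton_iff, mem_sdiff] at hvA ⊢
  split_ifs <;> grind

lemma pairwise_disjoint_shiftBlock {f : V → ι} (hC : ∀ i, C i = f ⁻¹' {i}) (hls : l ≠ s)
    (hA : A ⊆ C s) : Pairwise (Disjoint on shiftBlock C l s A) := by
  classical
  rw [show shiftBlock C l s A = _ from funext (shiftBlock_eq_preimage hC hls hA)]
  exact pairwise_disjoint_fiber _

lemma le_of_mem_shiftBlock [Preorder ι] {f : V → ι} (hC : ∀ i, C i = f ⁻¹' {i}) (hls : l < s)
    (hA : A ⊆ C s) {v : V} (hv : v ∈ shiftBlock C l s A i) : i ≤ f v := by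
  classical
  rw [shiftBlock_eq_preimage hC hls.ne hA] at hv
  obtain rfl := hv
  by_cases hvA : v ∈ C s \ A
  · simp only [if_pos hvA]
    have hfv : v ∈ f ⁻¹' {s} := hC s ▸ hvA.1
    exact (mem_singleton_iff.mp hfv) ▸ hls.le
  · simp only [if_neg hvA, le_refl]

lemma preconnected_induce_shiftBlock {G : SimpleGraph V} {p u : V}
    (hC : ∀ i, (G.induce (C i)).Preconnected) (hls : l ≠ s) (hps : p ∈ C s) (hul : u ∈ C l)
    (hup : G.Adj u p) (hA : IsCompOf G (C s \ {p})ᶜ A) (i : ι) :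
    (G.induce (shiftBlock C l s A i)).Preconnected := by
  by_cases hl : i = l
  · have hpA : p ∉ A := fun h => (hA.subset_of_compl h).2 rfl
    rw [hl, shiftBlock_left]
    exact (connected_induce_union (hC l) (hA.preconnected_induce_diff (hC s) hps) hul
      ⟨hps, hpA⟩ hup).preconnected
  by_cases hs : i = s
  · rw [hs, shiftBlock_right hls]
    exact hA.preconnected
  · rw [shiftBlock_of_ne hl hs]
    exact hC i

end ShiftBlock

theorem parent_is_minimal_and_shallower_general [Fintype V]
    (G : SimpleGraph V)
    (k : ℕ) (t : Fin k → V) (ht : Function.Injective t)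
    (Cr : Fin k → Set V) (hCr : IsRootFamily G t Cr)
    (M : Set (Sym2 V)) (hM : IsMinEdgeMultiwayCut G (Set.range t) M)
    (C : Fin k → Set V) (hC : ∀ i, IsComp (G.deleteEdges M) (C i) ∧ t i ∈ C i)
    (li s : Fin k) (hls : li < s) (p : V)
    (hps : p ∈ C s) (hpN : ∃ u ∈ C li, G.Adj p u)
    (C₀ : Set V) (hC₀ : IsCompOf G ((C s \ {p})ᶜ) C₀ ∧ t s ∈ C₀)
    (C2 : Fin k → Set V)
    (hC2 : ∀ i, C2 i = if i = li then C li ∪ (C s \ C₀) else if i = s then C₀ else C i)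
    (iM iR iP : V → Fin k)
    (hiM : ∀ v, v ∈ C (iM v)) (hiR : ∀ v, v ∈ Cr (iR v)) (hiP : ∀ v, v ∈ C2 (iP v)) :
    IsMinEdgeMultiwayCut G (Set.range t) (crossEdges G C2) ∧
    (∑ v : V, ((iP v : ℕ) - (iR v : ℕ))) < ∑ v : V, ((iM v : ℕ) - (iR v : ℕ)) := by
  obtain rfl : C2 = shiftBlock C li s C₀ := funext hC2
  obtain ⟨u, hu, hpu⟩ := hpN
  have hCfib := eq_preimage_of_forall_mem (hM.1.eq_of_mem_isComp ht hC) hiM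
  have hC₀s : C₀ ⊆ C s := fun v hv => (hC₀.1.subset_of_compl hv).1
  have hdisj := pairwise_disjoint_shiftBlock hCfib hls.ne hC₀s
  have hterm := apply_mem_shiftBlock (l := li) (fun i => (hC i).2) hC₀.2
  have hconn := preconnected_induce_shiftBlock (fun i => (hC i).1.preconnected_induce
    (deleteEdges_le M)) hls.ne hps hu hpu.symm hC₀.1
  have hpli : p ∈ shiftBlock C li s C₀ li := by
    rw [shiftBlock_left]
    exact Or.inr ⟨hps, fun h => (hC₀.1.subset_of_compl h).2 rfl⟩
  refine ⟨crossEdges_isMinEdgeMultiwayCut hdisj (fun v => ⟨iP v, hiP v⟩) hterm hconn, ?_⟩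
  -- keeps the `p`-term of the depth from being truncated to `0`
  have hRp : iR p ≤ li := hCr.index_le_of_preconnected hiR (hconn li) (hterm li)
    (fun q hq => eq_of_mem_of_pairwise_disjoint hdisj (hterm q) hq) hpli
  have hPp : iP p = li := eq_of_mem_of_pairwise_disjoint hdisj (hiP p) hpli
  have hMp : iM p = s := hM.1.eq_of_mem_isComp ht hC (hiM p) hps
  refine Finset.sum_lt_sum (fun v _ => Nat.sub_le_sub_right ?_ _) ⟨p, Finset.mem_univ p, ?_⟩
  · exact le_of_mem_shiftBlock hCfib hls hC₀s (hiP v)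
  · rw [hPp, hMp]
    omega

/-- Let `M ≠ R` be a minimal edge multiway cut with partition
`C₁, …, C_k`, let `li` be the largest index of a block admitting a shiftable vertex, let
`p` be the pivot of `M` (a designated vertex shiftable into `C li`, lying in `C s` with
`li < s`), and let `C₀` be the component of `G[C s \ {p}]` containing `t s`. Then the
parent partition `C2` (obtained by moving `C s \ C₀` into `C li`) yields a minimal edge
multiway cut `Par(M)` with `depth(Par(M)) < depth(M)`. -/
theorem parent_is_minimal_and_shallower [Fintype V]
    (G : SimpleGraph V) (hconn : G.Connected)
    (k : ℕ) (hk : 0 < k) (t : Fin k → V) (ht : Function.Injective t)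
    (Cr : Fin k → Set V) (hCr : IsRootFamily G t Cr)
    (M : Set (Sym2 V)) (hM : IsMinEdgeMultiwayCut G (Set.range t) M)
    (C : Fin k → Set V) (hC : ∀ i, IsComp (G.deleteEdges M) (C i) ∧ t i ∈ C i)
    (hne : M ≠ crossEdges G Cr)
    (li s : Fin k) (hls : li < s) (p : V)
    (hpT : p ∉ Set.range t) (hps : p ∈ C s) (hpN : ∃ u ∈ C li, G.Adj p u)
    (hmax : ∀ (j j' : Fin k) (w : V), j < j' → w ∉ Set.range t → w ∈ C j' →
      (∃ u ∈ C j, G.Adj w u) → j ≤ li)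
    (C₀ : Set V) (hC₀ : IsCompOf G ((C s \ {p})ᶜ) C₀ ∧ t s ∈ C₀)
    (C2 : Fin k → Set V)
    (hC2 : ∀ i, C2 i = if i = li then C li ∪ (C s \ C₀) else if i = s then C₀ else C i)
    (iM iR iP : V → Fin k)
    (hiM : ∀ v, v ∈ C (iM v)) (hiR : ∀ v, v ∈ Cr (iR v)) (hiP : ∀ v, v ∈ C2 (iP v)) :
    IsMinEdgeMultiwayCut G (Set.range t) (crossEdges G C2) ∧
    (∑ v : V, ((iP v : ℕ) - (iR v : ℕ))) < ∑ v : V, ((iM v : ℕ) - (iR v : ℕ)) :=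
  parent_is_minimal_and_shallower_general G k t ht Cr hCr M hM C hC li s hls p hps hpN C₀ hC₀ C2 hC2
    iM iR iP hiM hiR hiP
end
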